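/- arXiv:0803.0341 — 3 statements merged into one kernel-verified Lean document; each statement's English description precedes it below -/
import Mathlib

section
/- Let k be a field of characteristic not 2 or 3, S = k[x_1,...,x_d] with d ≥ 3, and let I be the homogeneous ideal generated by x_2^3 together with all degree-2 monomials other than x_2^2 and x_1 x_2 (equivalently, I is the ideal orthogonal to x_1 x_2^2 and its partial derivatives under the apolarity pairing). Then the space of degree-0 graded S-module homomorphisms Hom_S(I, S/I)_0 has k-dimension at most 2d − 1. -/
open MvPolynomial

namespace Stmt3Aux

variable (k : Type*) [Field k] (d : ℕ)

/-- the generating set -/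
def G (hd : 3 ≤ d) : Set (MvPolynomial (Fin d) k) :=
  {X (⟨1, Nat.lt_of_lt_of_le (by norm_num) hd⟩ : Fin d) ^ 3} ∪
  {p | ∃ i j : Fin d, i ≤ j ∧
      ¬(i = ⟨0, Nat.lt_of_lt_of_le (by norm_num) hd⟩ ∧ j = ⟨1, Nat.lt_of_lt_of_le (by norm_num) hd⟩) ∧
      ¬(i = ⟨1, Nat.lt_of_lt_of_le (by norm_num) hd⟩ ∧ j = ⟨1, Nat.lt_of_lt_of_le (by norm_num) hd⟩) ∧
      p = X i * X j}

variable (hd : 3 ≤ d)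

def i0 : Fin d := ⟨0, Nat.lt_of_lt_of_le (by norm_num) hd⟩
def i1 : Fin d := ⟨1, Nat.lt_of_lt_of_le (by norm_num) hd⟩

noncomputable def m01 : Fin d →₀ ℕ := Finsupp.single (i0 d hd) 1 + Finsupp.single (i1 d hd) 1
noncomputable def m11 : Fin d →₀ ℕ := Finsupp.single (i1 d hd) 2
noncomputable def m011 : Fin d →₀ ℕ := Finsupp.single (i0 d hd) 1 + Finsupp.single (i1 d hd) 2

variable {k d}

lemma pair_mem_G (i j : Fin d) (hij : i ≤ j) (h1 : ¬(i.val = 0 ∧ j.val = 1))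
    (h2 : ¬(i.val = 1 ∧ j.val = 1)) : X i * X j ∈ G k d hd := by
  right
  refine ⟨i, j, hij, ?_, ?_, rfl⟩
  · rintro ⟨rfl, rfl⟩; exact h1 ⟨rfl, rfl⟩
  · rintro ⟨rfl, rfl⟩; exact h2 ⟨rfl, rfl⟩

lemma cube_mem_G : (X (i1 d hd) : MvPolynomial (Fin d) k) ^ 3 ∈ G k d hd := by
  left; rfl

lemma i0_ne_i1 : i0 d hd ≠ i1 d hd := by
  simp [i0, i1, Fin.ext_iff]

lemma i1_ne_i0 : i1 d hd ≠ i0 d hd := (i0_ne_i1 hd).symm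

lemma m011_apply_i0 : m011 d hd (i0 d hd) = 1 := by
  simp [m011, Finsupp.single_apply, i1_ne_i0 hd]

lemma m011_apply_i1 : m011 d hd (i1 d hd) = 2 := by
  simp [m011, Finsupp.single_apply, (i0_ne_i1 hd)]

lemma m011_apply_other (x : Fin d) (hx0 : x ≠ i0 d hd) (hx1 : x ≠ i1 d hd) :
    m011 d hd x = 0 := by
  simp [m011, Finsupp.single_apply, Ne.symm hx0, Ne.symm hx1]


lemma coeff_span_eq_zero (u : Fin d →₀ ℕ) (hu : u ≤ m011 d hd)
    {p : MvPolynomial (Fin d) k} (hp : p ∈ Ideal.span (G k d hd)) :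
    coeff u p = 0 := by
  have main : ∀ x ∈ Ideal.span (G k d hd), ∀ q : MvPolynomial (Fin d) k,
      ∀ u ≤ m011 d hd, coeff u (q * x) = 0 := by
    intro x hx
    induction hx using Submodule.span_induction with
    | mem g hg =>
      intro q u hu
      rcases hg with hg | ⟨i, j, hij, h1, h2, rfl⟩
      · simp only [Set.mem_singleton_iff] at hg
        subst hg
        show coeff u (q * X (i1 d hd) ^ 3) = 0
        have hb : u (i1 d hd) ≤ 2 := by
          have := hu (i1 d hd); rwa [m011_apply_i1 hd] at this
        have e : q * X (i1 d hd) ^ 3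
            = ((q * X (i1 d hd)) * X (i1 d hd)) * X (i1 d hd) := by ring
        rw [e, coeff_mul_X']
        split_ifs with hm1
        · rw [coeff_mul_X']
          split_ifs with hm2
          · rw [coeff_mul_X']
            split_ifs with hm3
            · exfalso
              rw [Finsupp.mem_support_iff, Finsupp.tsub_apply, Finsupp.tsub_apply,
                Finsupp.single_apply, if_pos rfl] at hm3
              omega
            · rfl
          · rfl
        · rfl
      · have h1' : ¬(i.val = 0 ∧ j.val = 1) :=
          fun h => h1 ⟨Fin.ext h.1, Fin.ext h.2⟩
        have h2' : ¬(i.val = 1 ∧ j.val = 1) :=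
          fun h => h2 ⟨Fin.ext h.1, Fin.ext h.2⟩
        have hij' : i.val ≤ j.val := hij
        rw [show q * (X i * X j) = (q * X i) * X j by ring, coeff_mul_X']
        split_ifs with hj
        · rw [Finsupp.mem_support_iff] at hj
          by_cases hj1 : j = i1 d hd
          · exfalso
            have hjv : j.val = 1 := by rw [hj1]; rfl
            have : i.val = 0 ∨ i.val = 1 := by omega
            rcases this with h | h
            · exact h1' ⟨h, hjv⟩
            · exact h2' ⟨h, hjv⟩
          · by_cases hj0 : j = i0 d hd
            · subst hj0
              have hiv : i.val = 0 := Nat.le_zero.mp hij'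
              have hi0 : i = i0 d hd := Fin.ext hiv
              subst hi0
              have hu0 : u (i0 d hd) ≤ 1 := by
                have := hu (i0 d hd); rwa [m011_apply_i0 hd] at this
              rw [coeff_mul_X']
              split_ifs with hi
              · exfalso
                rw [Finsupp.mem_support_iff, Finsupp.tsub_apply,
                  Finsupp.single_apply, if_pos rfl] at hi
                omega
              · rfl
            · exfalso
              have := hu j
              rw [m011_apply_other hd j hj0 hj1] at this
              omega
        · rfl
    | zero => intro q u hu; simp
    | add x y _ _ hx hy =>
      intro q u hu
      rw [mul_add, coeff_add, hx q u hu, hy q u hu, add_zero]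
    | smul a x _ hx =>
      intro q u hu
      rw [smul_eq_mul, ← mul_assoc]
      exact hx (q * a) u hu
  have := main p hp 1 u hu
  simpa using this


lemma X_mul_X_eq (i j : Fin d) :
    (X i * X j : MvPolynomial (Fin d) k)
      = monomial (Finsupp.single i 1 + Finsupp.single j 1) 1 := by
  rw [monomial_single_add, ← X_pow_eq_monomial, pow_one, pow_one]

lemma monomial_mem_of_le {w u : Fin d →₀ ℕ} (hw : w ≤ u) (c : k)
    (hgen : (monomial w (1 : k)) ∈ Ideal.span (G k d hd)) :
    monomial u c ∈ Ideal.span (G k d hd) := by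
  have : (monomial u c : MvPolynomial (Fin d) k)
      = monomial (u - w) c * monomial w 1 := by
    rw [monomial_mul, mul_one, tsub_add_cancel_of_le hw]
  rw [this]
  exact Ideal.mul_mem_left _ _ hgen

lemma single_le (a : Fin d) {u : Fin d →₀ ℕ} {n : ℕ} (h : n ≤ u a) :
    Finsupp.single a n ≤ u := by
  rw [Finsupp.le_def]
  intro i
  rw [Finsupp.single_apply]
  split_ifs with hh
  · subst hh; exact h
  · exact Nat.zero_le _

lemma pair_le (a b : Fin d) {u : Fin d →₀ ℕ} (ha : 1 ≤ u a) (hb : 1 ≤ u b)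
    (hab : a ≠ b) : Finsupp.single a 1 + Finsupp.single b 1 ≤ u := by
  rw [Finsupp.le_def]
  intro i
  rw [Finsupp.add_apply, Finsupp.single_apply, Finsupp.single_apply]
  split_ifs with h h' h'
  · exact absurd (h.trans h'.symm) hab
  · subst h; simpa using ha
  · subst h'; simpa using hb
  · simp

lemma monomial_mem (u : Fin d →₀ ℕ) (hdeg : 2 ≤ u.degree)
    (hnle : ¬ u ≤ m011 d hd) (c : k) :
    monomial u c ∈ Ideal.span (G k d hd) := by
  rw [Finsupp.le_def] at hnle
  push_neg at hnle
  obtain ⟨x, hx⟩ := hnle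
  by_cases hx0 : x = i0 d hd
  · subst hx0
    rw [m011_apply_i0 hd] at hx
    refine monomial_mem_of_le hd (u := u)
      (w := Finsupp.single (i0 d hd) 1 + Finsupp.single (i0 d hd) 1) ?_ c ?_
    · rw [← Finsupp.single_add]
      exact single_le _ (by omega)
    · rw [← X_mul_X_eq]
      refine Ideal.subset_span (pair_mem_G hd _ _ le_rfl ?_ ?_)
      · rintro ⟨-, h⟩; simp [i0] at h
      · rintro ⟨h, -⟩; simp [i0] at h
  · by_cases hx1 : x = i1 d hd
    · subst hx1
      rw [m011_apply_i1 hd] at hx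
      refine monomial_mem_of_le hd (u := u) (w := Finsupp.single (i1 d hd) 3) ?_ c ?_
      · exact single_le _ (by omega)
      · rw [← X_pow_eq_monomial]
        exact Ideal.subset_span (cube_mem_G hd)
    · have hxv : 2 ≤ x.val := by
        have h0 : x.val ≠ 0 := fun h => hx0 (Fin.ext h)
        have h1 : x.val ≠ 1 := fun h => hx1 (Fin.ext h)
        omega
      rw [m011_apply_other hd x hx0 hx1] at hx
      by_cases hx2 : 2 ≤ u x
      · refine monomial_mem_of_le hd (u := u)
          (w := Finsupp.single x 1 + Finsupp.single x 1) ?_ c ?_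
        · rw [← Finsupp.single_add]
          exact single_le _ (by omega)
        · rw [← X_mul_X_eq]
          refine Ideal.subset_span (pair_mem_G hd _ _ le_rfl ?_ ?_)
          · rintro ⟨-, h⟩; omega
          · rintro ⟨h, -⟩; omega
      · have hux : u x = 1 := by omega
        have hy : ∃ y, y ≠ x ∧ u y ≠ 0 := by
          by_contra hcon
          push_neg at hcon
          have hsub : u.support ⊆ {x} := by
            intro y hy
            rw [Finsupp.mem_support_iff] at hy
            rcases eq_or_ne y x with rfl | hne
            · exact Finset.mem_singleton_self _
            · exact absurd (hcon y hne) hy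
          have : u.degree ≤ u x := by
            calc u.degree = ∑ i ∈ u.support, u i := rfl
            _ ≤ ∑ i ∈ ({x} : Finset (Fin d)), u i :=
              Finset.sum_le_sum_of_subset hsub
            _ = u x := Finset.sum_singleton _ _
          omega
        obtain ⟨y, hyx, hy⟩ := hy
        rcases lt_or_gt_of_ne hyx with hlt | hgt
        · refine monomial_mem_of_le hd (u := u)
            (w := Finsupp.single y 1 + Finsupp.single x 1) ?_ c ?_
          · exact pair_le _ _ (by omega) (by omega) hyx
          · rw [← X_mul_X_eq]
            refine Ideal.subset_span (pair_mem_G hd _ _ hlt.le ?_ ?_)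
            · rintro ⟨-, h⟩; omega
            · rintro ⟨-, h⟩; omega
        · refine monomial_mem_of_le hd (u := u)
            (w := Finsupp.single x 1 + Finsupp.single y 1) ?_ c ?_
          · exact pair_le _ _ (by omega) (by omega) (Ne.symm hyx)
          · rw [← X_mul_X_eq]
            refine Ideal.subset_span (pair_mem_G hd _ _ hgt.le ?_ ?_)
            · rintro ⟨h, -⟩; omega
            · rintro ⟨h, -⟩; omega


lemma degree_of_le {u : Fin d →₀ ℕ} (hu : u ≤ m011 d hd) :
    u.degree = u (i0 d hd) + u (i1 d hd) := by
  have hsub : u.support ⊆ {i0 d hd, i1 d hd} := by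
    intro y hy
    rw [Finsupp.mem_support_iff] at hy
    by_contra hcon
    simp only [Finset.mem_insert, Finset.mem_singleton] at hcon
    push_neg at hcon
    have := hu y
    rw [m011_apply_other hd y hcon.1 hcon.2] at this
    omega
  have : u.degree = ∑ i ∈ ({i0 d hd, i1 d hd} : Finset (Fin d)), u i := by
    refine Finset.sum_subset hsub ?_
    intro x _ hx
    rw [Finsupp.mem_support_iff] at hx
    push_neg at hx
    exact hx
  rw [this, Finset.sum_pair (i0_ne_i1 hd)]

lemma eq_rep {u : Fin d →₀ ℕ} (hu : u ≤ m011 d hd) :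
    u = Finsupp.single (i0 d hd) (u (i0 d hd))
        + Finsupp.single (i1 d hd) (u (i1 d hd)) := by
  ext y
  rw [Finsupp.add_apply, Finsupp.single_apply, Finsupp.single_apply]
  by_cases h0 : y = i0 d hd
  · subst h0
    rw [if_pos rfl, if_neg (i1_ne_i0 hd)]
    omega
  · by_cases h1 : y = i1 d hd
    · subst h1
      rw [if_pos rfl, if_neg (i0_ne_i1 hd)]
      omega
    · rw [if_neg (fun h => h0 h.symm), if_neg (fun h => h1 h.symm)]
      have := hu y
      rw [m011_apply_other hd y h0 h1] at this
      omega

lemma class2 {u : Fin d →₀ ℕ} (hu : u ≤ m011 d hd) (hdeg : u.degree = 2) :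
    u = m01 d hd ∨ u = m11 d hd := by
  have ha := hu (i0 d hd)
  have hb := hu (i1 d hd)
  rw [m011_apply_i0 hd] at ha
  rw [m011_apply_i1 hd] at hb
  rw [degree_of_le hd hu] at hdeg
  have hcase : (u (i0 d hd) = 0 ∧ u (i1 d hd) = 2)
      ∨ (u (i0 d hd) = 1 ∧ u (i1 d hd) = 1) := by omega
  rcases hcase with ⟨h1, h2⟩ | ⟨h1, h2⟩
  · right
    rw [eq_rep hd hu, h1, h2]
    simp [m11]
  · left
    rw [eq_rep hd hu, h1, h2]
    rfl

lemma class3 {u : Fin d →₀ ℕ} (hu : u ≤ m011 d hd) (hdeg : u.degree = 3) :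
    u = m011 d hd := by
  have ha := hu (i0 d hd)
  have hb := hu (i1 d hd)
  rw [m011_apply_i0 hd] at ha
  rw [m011_apply_i1 hd] at hb
  rw [degree_of_le hd hu] at hdeg
  have h1 : u (i0 d hd) = 1 := by omega
  have h2 : u (i1 d hd) = 2 := by omega
  rw [eq_rep hd hu, h1, h2]
  rfl

lemma homog_mem_2 {y : MvPolynomial (Fin d) k}
    (hy : y ∈ homogeneousSubmodule (Fin d) k 2)
    (h01 : coeff (m01 d hd) y = 0) (h11 : coeff (m11 d hd) y = 0) :
    y ∈ Ideal.span (G k d hd) := by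
  rw [mem_homogeneousSubmodule] at hy
  rw [as_sum y]
  refine Ideal.sum_mem _ ?_
  intro v hv
  have hcoeff : coeff v y ≠ 0 := MvPolynomial.mem_support_iff.mp hv
  have hdeg : v.degree = 2 := by
    rw [Finsupp.degree_eq_weight_one]
    exact hy hcoeff
  by_cases hle : v ≤ m011 d hd
  · rcases class2 hd hle hdeg with rfl | rfl
    · exact absurd h01 hcoeff
    · exact absurd h11 hcoeff
  · exact monomial_mem hd v (by omega) hle _

lemma homog_mem_3 {y : MvPolynomial (Fin d) k}
    (hy : y ∈ homogeneousSubmodule (Fin d) k 3)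
    (h011 : coeff (m011 d hd) y = 0) :
    y ∈ Ideal.span (G k d hd) := by
  rw [mem_homogeneousSubmodule] at hy
  rw [as_sum y]
  refine Ideal.sum_mem _ ?_
  intro v hv
  have hcoeff : coeff v y ≠ 0 := MvPolynomial.mem_support_iff.mp hv
  have hdeg : v.degree = 3 := by
    rw [Finsupp.degree_eq_weight_one]
    exact hy hcoeff
  by_cases hle : v ≤ m011 d hd
  · rw [class3 hd hle hdeg] at hcoeff
    exact absurd h011 hcoeff
  · exact monomial_mem hd v (by omega) hle _


variable (k) in
noncomputable def F (u : Fin d →₀ ℕ) (hu : u ≤ m011 d hd) :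
    (MvPolynomial (Fin d) k ⧸ Ideal.span (G k d hd)) →ₗ[k] k :=
  (Submodule.liftQ ((Ideal.span (G k d hd)).restrictScalars k) (lcoeff k u)
      (fun p hp => coeff_span_eq_zero hd u hu hp)).comp
    (Submodule.Quotient.restrictScalarsEquiv k
      (Ideal.span (G k d hd) : Submodule (MvPolynomial (Fin d) k)
        (MvPolynomial (Fin d) k))).symm.toLinearMap

lemma F_mk (u : Fin d →₀ ℕ) (hu : u ≤ m011 d hd) (y : MvPolynomial (Fin d) k) :
    F k hd u hu (Ideal.Quotient.mk (Ideal.span (G k d hd)) y) = coeff u y := rfl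

variable (k) in
noncomputable def evF (x : ↥(Ideal.span (G k d hd)))
    (u : Fin d →₀ ℕ) (hu : u ≤ m011 d hd) :
    ((↥(Ideal.span (G k d hd))) →ₗ[MvPolynomial (Fin d) k]
      (MvPolynomial (Fin d) k ⧸ Ideal.span (G k d hd))) →ₗ[k] k where
  toFun φ := F k hd u hu (φ x)
  map_add' φ ψ := by simp
  map_smul' c φ := by simp


variable (k) in
noncomputable def x00 : ↥(Ideal.span (G k d hd)) :=
  ⟨X (i0 d hd) * X (i0 d hd), Ideal.subset_span
    (pair_mem_G hd _ _ le_rfl (by simp [i0]) (by simp [i0]))⟩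

def emb (j : Fin (d - 2)) : Fin d := ⟨j.val + 2, by omega⟩

lemma emb_val (j : Fin (d - 2)) : (emb hd j).val = j.val + 2 := rfl

lemma i0_le (x : Fin d) : i0 d hd ≤ x := by
  simp [Fin.le_def, i0]

lemma i1_le_emb (j : Fin (d - 2)) : i1 d hd ≤ emb hd j := by
  simp [Fin.le_def, i1, emb]

variable (k) in
noncomputable def x0 (j : Fin (d - 2)) : ↥(Ideal.span (G k d hd)) :=
  ⟨X (i0 d hd) * X (emb hd j), Ideal.subset_span
    (pair_mem_G hd _ _ (i0_le hd _) (by simp [i0, emb]) (by simp [i0]))⟩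

variable (k) in
noncomputable def x1 (j : Fin (d - 2)) : ↥(Ideal.span (G k d hd)) :=
  ⟨X (i1 d hd) * X (emb hd j), Ideal.subset_span
    (pair_mem_G hd _ _ (i1_le_emb hd _) (by simp [i1]) (by simp [emb]))⟩

variable (k) in
noncomputable def xcube : ↥(Ideal.span (G k d hd)) :=
  ⟨X (i1 d hd) ^ 3, Ideal.subset_span (cube_mem_G hd)⟩

lemma hom_pair (i j : Fin d) :
    (X i * X j : MvPolynomial (Fin d) k) ∈ homogeneousSubmodule (Fin d) k 2 :=
  (mem_homogeneousSubmodule _ _).mpr ((isHomogeneous_X k i).mul (isHomogeneous_X k j))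

lemma hom_cube :
    (X (i1 d hd) ^ 3 : MvPolynomial (Fin d) k) ∈ homogeneousSubmodule (Fin d) k 3 :=
  (mem_homogeneousSubmodule _ _).mpr (by simpa using (isHomogeneous_X k (i1 d hd)).pow 3)


lemma m01_le : m01 d hd ≤ m011 d hd := by
  rw [Finsupp.le_def]
  intro x
  simp only [m01, m011, Finsupp.add_apply, Finsupp.single_apply]
  split_ifs <;> omega

lemma m11_le : m11 d hd ≤ m011 d hd := by
  rw [Finsupp.le_def]
  intro x
  simp only [m11, m011, Finsupp.add_apply, Finsupp.single_apply]
  split_ifs <;> omega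

lemma m011_eq_alt : m011 d hd = Finsupp.single (i1 d hd) 1 + m01 d hd := by
  unfold m011 m01
  rw [show (2 : ℕ) = 1 + 1 from rfl, Finsupp.single_add]
  abel

lemma key (φ : (↥(Ideal.span (G k d hd))) →ₗ[MvPolynomial (Fin d) k]
      (MvPolynomial (Fin d) k ⧸ Ideal.span (G k d hd)))
    (hcond : ∀ (n : ℕ) (x : ↥(Ideal.span (G k d hd))),
      (x : MvPolynomial (Fin d) k) ∈ homogeneousSubmodule (Fin d) k n →
      ∃ y ∈ homogeneousSubmodule (Fin d) k n,
        φ x = Ideal.Quotient.mk (Ideal.span (G k d hd)) y)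
    (h1 : F k hd (m01 d hd) (m01_le hd) (φ (x00 k hd)) = 0)
    (h2 : F k hd (m11 d hd) (m11_le hd) (φ (x00 k hd)) = 0)
    (h3 : F k hd (m011 d hd) le_rfl (φ (xcube k hd)) = 0)
    (h4 : ∀ j : Fin (d - 2), F k hd (m01 d hd) (m01_le hd) (φ (x0 k hd j)) = 0)
    (h5 : ∀ j : Fin (d - 2), F k hd (m01 d hd) (m01_le hd) (φ (x1 k hd j)) = 0) :
    φ = 0 := by
  have hsmul_mk : ∀ r y : MvPolynomial (Fin d) k,
      r • (Ideal.Quotient.mk (Ideal.span (G k d hd)) y)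
        = Ideal.Quotient.mk (Ideal.span (G k d hd)) (r * y) :=
    fun r y => (Submodule.Quotient.mk_smul _ r y).symm
  have coeff_from_smul0 : ∀ y : MvPolynomial (Fin d) k,
      (X (i0 d hd) : MvPolynomial (Fin d) k)
        • (Ideal.Quotient.mk (Ideal.span (G k d hd)) y) = 0 →
      coeff (m11 d hd) y = 0 := by
    intro y h
    rw [hsmul_mk, Ideal.Quotient.eq_zero_iff_mem] at h
    have h2 := coeff_span_eq_zero hd (m011 d hd) le_rfl h
    rwa [show m011 d hd = Finsupp.single (i0 d hd) 1 + m11 d hd from rfl,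
      coeff_X_mul] at h2
  have coeff_from_smul1 : ∀ y : MvPolynomial (Fin d) k,
      (X (i1 d hd) : MvPolynomial (Fin d) k)
        • (Ideal.Quotient.mk (Ideal.span (G k d hd)) y) = 0 →
      coeff (m01 d hd) y = 0 := by
    intro y h
    rw [hsmul_mk, Ideal.Quotient.eq_zero_iff_mem] at h
    have h2 := coeff_span_eq_zero hd (m011 d hd) le_rfl h
    rwa [m011_eq_alt hd, coeff_X_mul] at h2
  have rel : ∀ (x y : ↥(Ideal.span (G k d hd))) (r s : MvPolynomial (Fin d) k),
      r * (x : MvPolynomial (Fin d) k) = s * (y : MvPolynomial (Fin d) k) →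
      r • φ x = s • φ y := by
    intro x y r s h
    rw [← map_smul, ← map_smul]
    congr 1
    exact Subtype.ext (by simp only [SetLike.val_smul, smul_eq_mul]; exact h)
  -- step 0 : φ (x00) = 0
  have step0 : φ (x00 k hd) = 0 := by
    obtain ⟨y, hy, hmk⟩ := hcond 2 (x00 k hd) (hom_pair _ _)
    rw [hmk] at h1 h2 ⊢
    rw [Ideal.Quotient.eq_zero_iff_mem]
    exact homog_mem_2 hd hy h1 h2
  -- step B : φ (x0 j) = 0
  have stepB : ∀ j : Fin (d - 2), φ (x0 k hd j) = 0 := by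
    intro j
    obtain ⟨y, hy, hmk⟩ := hcond 2 (x0 k hd j) (hom_pair _ _)
    have hj := h4 j
    rw [hmk] at hj
    have hrel : X (i0 d hd) • φ (x0 k hd j) = X (emb hd j) • φ (x00 k hd) :=
      rel _ _ _ _ (by simp only [x0, x00]; ring)
    rw [step0, smul_zero, hmk] at hrel
    have c2 := coeff_from_smul0 y hrel
    rw [hmk, Ideal.Quotient.eq_zero_iff_mem]
    exact homog_mem_2 hd hy hj c2
  -- step C : φ (x1 j) = 0
  have stepC : ∀ j : Fin (d - 2), φ (x1 k hd j) = 0 := by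
    intro j
    obtain ⟨y, hy, hmk⟩ := hcond 2 (x1 k hd j) (hom_pair _ _)
    have hj := h5 j
    rw [hmk] at hj
    have hrel : X (i0 d hd) • φ (x1 k hd j) = X (i1 d hd) • φ (x0 k hd j) :=
      rel _ _ _ _ (by simp only [x0, x1]; ring)
    rw [stepB j, smul_zero, hmk] at hrel
    have c2 := coeff_from_smul0 y hrel
    rw [hmk, Ideal.Quotient.eq_zero_iff_mem]
    exact homog_mem_2 hd hy hj c2
  -- step D : φ ⟨X i * X j⟩ = 0 for 2 ≤ i, j
  have stepD : ∀ (i jj : Fin d), 2 ≤ i.val → 2 ≤ jj.val →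
      ∀ hmem : (X i * X jj : MvPolynomial (Fin d) k) ∈ Ideal.span (G k d hd),
      φ ⟨X i * X jj, hmem⟩ = 0 := by
    intro i jj hi hjv hmem
    have hjj : jj = emb hd ⟨jj.val - 2, by omega⟩ :=
      Fin.ext (show jj.val = jj.val - 2 + 2 by omega)
    set j' : Fin (d - 2) := ⟨jj.val - 2, by omega⟩ with hj'
    obtain ⟨y, hy, hmk⟩ := hcond 2 ⟨X i * X jj, hmem⟩ (hom_pair _ _)
    have hrel0 : X (i0 d hd) • φ ⟨X i * X jj, hmem⟩ = X i • φ (x0 k hd j') :=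
      rel _ _ _ _ (by simp only [x0]; rw [← hjj]; ring)
    rw [stepB j', smul_zero, hmk] at hrel0
    have c2 := coeff_from_smul0 y hrel0
    have hrel1 : X (i1 d hd) • φ ⟨X i * X jj, hmem⟩ = X i • φ (x1 k hd j') :=
      rel _ _ _ _ (by simp only [x1]; rw [← hjj]; ring)
    rw [stepC j', smul_zero, hmk] at hrel1
    have c1 := coeff_from_smul1 y hrel1
    rw [hmk, Ideal.Quotient.eq_zero_iff_mem]
    exact homog_mem_2 hd hy c1 c2
  -- step E : φ (xcube) = 0
  have stepE : φ (xcube k hd) = 0 := by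
    obtain ⟨y, hy, hmk⟩ := hcond 3 (xcube k hd) (hom_cube hd)
    rw [hmk] at h3 ⊢
    rw [Ideal.Quotient.eq_zero_iff_mem]
    exact homog_mem_3 hd hy h3
  -- conclude
  apply LinearMap.ext
  rintro ⟨p, hp⟩
  rw [LinearMap.zero_apply]
  induction hp using Submodule.span_induction with
  | mem g hg =>
    rcases hg with hg | ⟨i, j, hij, hna, hnb, rfl⟩
    · rw [Set.mem_singleton_iff] at hg
      subst hg
      exact stepE
    · have hij' : i.val ≤ j.val := hij
      by_cases hi0 : i.val = 0
      · by_cases hj0 : j.val = 0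
        · have e1 : i = i0 d hd := Fin.ext hi0
          have e2 : j = i0 d hd := Fin.ext hj0
          subst e1; subst e2
          exact step0
        · by_cases hj1 : j.val = 1
          · exact absurd ⟨Fin.ext hi0, Fin.ext hj1⟩ hna
          · have e1 : i = i0 d hd := Fin.ext hi0
            subst e1
            obtain ⟨j', e2⟩ : ∃ j' : Fin (d - 2), emb hd j' = j :=
              ⟨⟨j.val - 2, by omega⟩, Fin.ext (show j.val - 2 + 2 = j.val by omega)⟩
            subst e2
            exact stepB _
      · by_cases hi1 : i.val = 1
        · by_cases hj1 : j.val = 1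
          · exact absurd ⟨Fin.ext hi1, Fin.ext hj1⟩ hnb
          · have e1 : i = i1 d hd := Fin.ext hi1
            subst e1
            obtain ⟨j', e2⟩ : ∃ j' : Fin (d - 2), emb hd j' = j :=
              ⟨⟨j.val - 2, by omega⟩, Fin.ext (show j.val - 2 + 2 = j.val by omega)⟩
            subst e2
            exact stepC _
        · exact stepD i j (by omega) (by omega) _
  | zero => exact map_zero φ
  | add x y hx hy ihx ihy =>
    exact (map_add φ ⟨x, hx⟩ ⟨y, hy⟩).trans (by rw [ihx, ihy, add_zero])
  | smul a x hx ih =>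
    exact (LinearMap.map_smul φ a ⟨x, hx⟩).trans (by rw [ih, smul_zero])

end Stmt3Aux

open Stmt3Aux in
set_option maxHeartbeats 1000000 in
theorem stmt3 (k : Type*) [Field k] (h2 : (2 : k) ≠ 0) (h3 : (3 : k) ≠ 0)
    (d : ℕ) (hd : 3 ≤ d)
    (I : Ideal (MvPolynomial (Fin d) k))
    (hI : I = Ideal.span
      ({X (⟨1, by omega⟩ : Fin d) ^ 3} ∪
       {p | ∃ i j : Fin d, i ≤ j ∧
          ¬(i = ⟨0, by omega⟩ ∧ j = ⟨1, by omega⟩) ∧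
          ¬(i = ⟨1, by omega⟩ ∧ j = ⟨1, by omega⟩) ∧
          p = X i * X j})) :
    ∀ W : Submodule k
        ((↥I) →ₗ[MvPolynomial (Fin d) k] (MvPolynomial (Fin d) k ⧸ I)),
      (W : Set ((↥I) →ₗ[MvPolynomial (Fin d) k] (MvPolynomial (Fin d) k ⧸ I))) =
        {φ | ∀ (j : ℕ) (x : ↥I), (x : MvPolynomial (Fin d) k) ∈ homogeneousSubmodule (Fin d) k j →
          ∃ y ∈ homogeneousSubmodule (Fin d) k j, φ x = Ideal.Quotient.mk I y} →
      Module.finrank k W ≤ 2 * d - 1 := by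
  have hI' : I = Ideal.span (G k d hd) := hI
  clear hI
  subst hI'
  intro W hW
  let Φ : ((↥(Ideal.span (G k d hd))) →ₗ[MvPolynomial (Fin d) k]
      (MvPolynomial (Fin d) k ⧸ Ideal.span (G k d hd))) →ₗ[k]
      (k × k × k × ((Fin (d - 2)) → k) × ((Fin (d - 2)) → k)) :=
    (evF k hd (x00 k hd) (m01 d hd) (m01_le hd)).prod
      ((evF k hd (x00 k hd) (m11 d hd) (m11_le hd)).prod
        ((evF k hd (xcube k hd) (m011 d hd) le_rfl).prod
          ((LinearMap.pi fun j => evF k hd (x0 k hd j) (m01 d hd) (m01_le hd)).prod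
            (LinearMap.pi fun j => evF k hd (x1 k hd j) (m01 d hd) (m01_le hd)))))
  have hinj : Function.Injective (Φ.comp W.subtype) := by
    rw [injective_iff_map_eq_zero]
    intro φ hφ
    rw [LinearMap.comp_apply] at hφ
    have hcond : ∀ (n : ℕ) (x : ↥(Ideal.span (G k d hd))),
        (x : MvPolynomial (Fin d) k) ∈ homogeneousSubmodule (Fin d) k n →
        ∃ y ∈ homogeneousSubmodule (Fin d) k n,
          (W.subtype φ) x = Ideal.Quotient.mk (Ideal.span (G k d hd)) y := by
      have hmem : (φ.val) ∈ (W : Set _) := φ.2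
      rw [hW] at hmem
      exact hmem
    have c1 := congrArg (fun t => t.1) hφ
    have c2 := congrArg (fun t => t.2.1) hφ
    have c3 := congrArg (fun t => t.2.2.1) hφ
    have c4 := fun j : Fin (d - 2) => congrArg (fun t => t.2.2.2.1 j) hφ
    have c5 := fun j : Fin (d - 2) => congrArg (fun t => t.2.2.2.2 j) hφ
    have hz := key hd (W.subtype φ) hcond c1 c2 c3 c4 c5
    exact Submodule.coe_eq_zero.mp hz
  have hle : Module.finrank k W ≤ Module.finrank k
      (k × k × k × ((Fin (d - 2)) → k) × ((Fin (d - 2)) → k)) :=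
    LinearMap.finrank_le_finrank_of_injective hinj
  have heq : Module.finrank k
      (k × k × k × ((Fin (d - 2)) → k) × ((Fin (d - 2)) → k)) = 3 + (d - 2) + (d - 2) := by
    rw [Module.finrank_prod, Module.finrank_prod, Module.finrank_prod,
      Module.finrank_prod, Module.finrank_self, Module.finrank_pi, Fintype.card_fin]
    omega
  rw [heq] at hle
  omega
end

section
/- Let k be an algebraically closed field. Every monomial ideal I ⊆ k[x_1,...,x_d] of colength n is smoothable: there exists a flat degeneration from a radical ideal of n distinct points to I. Concretely, if I = ⟨x^{α^{(1)}}, ..., x^{α^{(m)}}⟩ and a_1, a_2, ... are distinct elements of k, then the ideal J generated by f_i = ∏_{j=1}^d (x_j − a_1)(x_j − a_2)···(x_j − a_{α^{(i)}_j}) for 1 ≤ i ≤ m is the radical ideal of the n distinct points {(a_{β_1+1}, ..., a_{β_d+1}) : x^β a standard monomial of I}; moreover in(J) = I for any global term order. -/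
open MvPolynomial

namespace Stmt6Aux
variable {k : Type*} [Field k] {d : ℕ}

noncomputable def P (a : ℕ → k) (m : ℕ) : Polynomial k :=
  ∏ l ∈ Finset.range m, (Polynomial.X - Polynomial.C (a l))

lemma P_monic (a : ℕ → k) (m : ℕ) : (P a m).Monic :=
  Polynomial.monic_prod_of_monic _ _ fun _ _ => Polynomial.monic_X_sub_C _

lemma P_natDegree (a : ℕ → k) (m : ℕ) : (P a m).natDegree = m := by
  rw [P, Polynomial.natDegree_prod]
  · simp
  · intro l _
    exact Polynomial.X_sub_C_ne_zero _

noncomputable def Q (a : ℕ → k) (j : Fin d) (m : ℕ) : MvPolynomial (Fin d) k :=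
  ∏ l ∈ Finset.range m, (X j - C (a l))

lemma Q_eq_aeval (a : ℕ → k) (j : Fin d) (m : ℕ) :
    Q a j m = Polynomial.aeval (X j : MvPolynomial (Fin d) k) (P a m) := by
  rw [Q, P, map_prod]
  refine Finset.prod_congr rfl fun l _ => ?_
  rw [map_sub, Polynomial.aeval_X, Polynomial.aeval_C, algebraMap_eq]

lemma coeff_aeval_single (p : Polynomial k) (j : Fin d) (t : ℕ) :
    coeff (Finsupp.single j t) (Polynomial.aeval (X j : MvPolynomial (Fin d) k) p)
      = p.coeff t := by
  classical
  rw [Polynomial.aeval_def, Polynomial.eval₂_eq_sum, Polynomial.sum_def, coeff_sum]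
  have : ∀ e ∈ p.support,
      coeff (Finsupp.single j t) ((algebraMap k (MvPolynomial (Fin d) k)) (p.coeff e) * X j ^ e)
        = if e = t then p.coeff e else 0 := by
    intro e _
    rw [algebraMap_eq, coeff_C_mul, coeff_X_pow]
    by_cases h : e = t
    · simp [h]
    · rw [if_neg (fun hh => h (Finsupp.single_injective j hh)), if_neg h, mul_zero]
  rw [Finset.sum_congr rfl this, Finset.sum_ite_eq' p.support t]
  split
  · rfl
  · exact (Polynomial.notMem_support_iff.mp (by assumption)).symm

lemma coeff_aeval_ne (p : Polynomial k) (j : Fin d) (δ : Fin d →₀ ℕ)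
    (h : coeff δ (Polynomial.aeval (X j : MvPolynomial (Fin d) k) p) ≠ 0) :
    ∃ t ≤ p.natDegree, δ = Finsupp.single j t := by
  classical
  rw [Polynomial.aeval_def, Polynomial.eval₂_eq_sum, Polynomial.sum_def, coeff_sum] at h
  obtain ⟨e, he, hne⟩ := Finset.exists_ne_zero_of_sum_ne_zero h
  rw [algebraMap_eq, coeff_C_mul, coeff_X_pow] at hne
  refine ⟨e, Polynomial.le_natDegree_of_mem_supp e he, ?_⟩
  by_contra hd
  rw [if_neg (fun hh => hd hh.symm)] at hne
  simp at hne

lemma coeff_Q_top (a : ℕ → k) (j : Fin d) (m : ℕ) :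
    coeff (Finsupp.single j m) (Q a j m) = 1 := by
  rw [Q_eq_aeval, coeff_aeval_single]
  have h := (P_monic a m).coeff_natDegree
  rwa [P_natDegree] at h

lemma coeff_Q_ne (a : ℕ → k) (j : Fin d) (m : ℕ) (δ : Fin d →₀ ℕ)
    (h : coeff δ (Q a j m) ≠ 0) : ∃ t ≤ m, δ = Finsupp.single j t := by
  rw [Q_eq_aeval] at h
  obtain ⟨t, ht, rfl⟩ := coeff_aeval_ne _ _ _ h
  exact ⟨t, by rwa [P_natDegree] at ht, rfl⟩



lemma coeff_prod_le (F : Fin d → MvPolynomial (Fin d) k) (g : Fin d → ℕ)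
    (hF : ∀ j δ, coeff δ (F j) ≠ 0 → ∃ t ≤ g j, δ = Finsupp.single j t)
    (s : Finset (Fin d)) :
    ∀ (δ : Fin d →₀ ℕ), coeff δ (∏ j ∈ s, F j) ≠ 0 →
      ∀ j, δ j ≤ if j ∈ s then g j else 0 := by
  classical
  induction s using Finset.induction_on with
  | empty =>
      intro δ h j
      rw [Finset.prod_empty, coeff_one] at h
      have h0 : (0 : Fin d →₀ ℕ) = δ := by
        by_contra hh; rw [if_neg hh] at h; exact h rfl
      rw [← h0]
      simp
  | @insert i s hi ih =>
      intro δ h j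
      rw [Finset.prod_insert hi, coeff_mul] at h
      obtain ⟨⟨u, v⟩, huv, hne⟩ := Finset.exists_ne_zero_of_sum_ne_zero h
      rw [Finset.HasAntidiagonal.mem_antidiagonal] at huv
      have hu : coeff u (F i) ≠ 0 := fun hh => hne (by simp [hh])
      have hv : coeff v (∏ j ∈ s, F j) ≠ 0 := fun hh => hne (by simp [hh])
      obtain ⟨t, ht, rfl⟩ := hF i u hu
      have hvj := ih v hv
      have hδ : δ j = Finsupp.single i t j + v j := by rw [← huv]; rfl
      by_cases hji : j = i
      · subst hji
        rw [if_pos (Finset.mem_insert_self j s)]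
        have : v j ≤ 0 := by have := hvj j; rwa [if_neg hi] at this
        rw [hδ, Finsupp.single_eq_same]
        omega
      · have hsv : Finsupp.single i t j = 0 := Finsupp.single_eq_of_ne' (fun hh => hji hh.symm)
        rw [hδ, hsv, zero_add]
        have := hvj j
        by_cases hjs : j ∈ s
        · rw [if_pos hjs] at this
          rw [if_pos (Finset.mem_insert_of_mem hjs)]
          exact this
        · rw [if_neg hjs] at this
          rw [if_neg (by simp [hji, hjs])]
          exact this

lemma coeff_prod_top (F : Fin d → MvPolynomial (Fin d) k) (g : Fin d → ℕ)
    (hF : ∀ j δ, coeff δ (F j) ≠ 0 → ∃ t ≤ g j, δ = Finsupp.single j t)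
    (s : Finset (Fin d)) :
    coeff (∑ j ∈ s, Finsupp.single j (g j)) (∏ j ∈ s, F j)
      = ∏ j ∈ s, coeff (Finsupp.single j (g j)) (F j) := by
  classical
  induction s using Finset.induction_on with
  | empty => simp
  | @insert i s hi ih =>
      rw [Finset.prod_insert hi, Finset.prod_insert hi, Finset.sum_insert hi, coeff_mul]
      set D : Fin d →₀ ℕ := ∑ j ∈ s, Finsupp.single j (g j) with hD
      have hDi : D i = 0 := by
        rw [hD, Finsupp.finset_sum_apply]
        refine Finset.sum_eq_zero fun j hj => ?_
        exact Finsupp.single_eq_of_ne' (fun hh => hi (hh ▸ hj))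
      rw [Finset.sum_eq_single (Finsupp.single i (g i), D)]
      · rw [ih]
      · rintro ⟨u, v⟩ huv hne
        rw [Finset.HasAntidiagonal.mem_antidiagonal] at huv
        by_cases hu : coeff u (F i) = 0
        · rw [hu, zero_mul]
        by_cases hv : coeff v (∏ j ∈ s, F j) = 0
        · rw [hv, mul_zero]
        exfalso
        obtain ⟨t, ht, rfl⟩ := hF i u hu
        have hvi : v i = 0 := by
          have := coeff_prod_le F g hF s v hv i
          rwa [if_neg hi, Nat.le_zero] at this
        have hti : t = g i := by
          have h2 := congrArg (fun w : Fin d →₀ ℕ => w i) huv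
          simp only [Finsupp.add_apply, Finsupp.single_eq_same, hvi, add_zero] at h2
          rw [hDi, add_zero] at h2
          exact h2
        subst hti
        have hveq : v = D := add_left_cancel huv
        exact hne (by rw [hveq])
      · intro hmem
        exfalso
        exact hmem (Finset.HasAntidiagonal.mem_antidiagonal.mpr rfl)


noncomputable def q (a : ℕ → k) (γ : Fin d →₀ ℕ) : MvPolynomial (Fin d) k :=
  ∏ j : Fin d, ∏ l ∈ Finset.range (γ j), (X j - C (a l))

lemma q_eq_prod_Q (a : ℕ → k) (γ : Fin d →₀ ℕ) :
    q a γ = ∏ j : Fin d, Q a j (γ j) := rfl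

lemma hFq (a : ℕ → k) (γ : Fin d →₀ ℕ) :
    ∀ j δ, coeff δ (Q a j (γ j)) ≠ 0 → ∃ t ≤ γ j, δ = Finsupp.single j t :=
  fun j δ h => coeff_Q_ne a j _ δ h

lemma sum_single_eq (γ : Fin d →₀ ℕ) :
    ∑ j : Fin d, Finsupp.single j (γ j) = γ := by
  ext i
  rw [Finsupp.finset_sum_apply]
  rw [Finset.sum_eq_single i
      (fun j _ hj => Finsupp.single_eq_of_ne' hj)
      (fun h => absurd (Finset.mem_univ i) h)]
  exact Finsupp.single_eq_same

lemma coeff_q_le {a : ℕ → k} {δ γ : Fin d →₀ ℕ} (h : coeff δ (q a γ) ≠ 0) : δ ≤ γ := by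
  rw [q_eq_prod_Q] at h
  have H := coeff_prod_le (fun j => Q a j (γ j)) (fun j => γ j) (hFq a γ) Finset.univ δ h
  rw [Finsupp.le_def]
  intro i
  have := H i
  rwa [if_pos (Finset.mem_univ i)] at this

lemma coeff_q_self (a : ℕ → k) (γ : Fin d →₀ ℕ) : coeff γ (q a γ) = 1 := by
  have H := coeff_prod_top (fun j => Q a j (γ j)) (fun j => γ j) (hFq a γ) Finset.univ
  rw [sum_single_eq] at H
  rw [q_eq_prod_Q, H]
  exact Finset.prod_eq_one fun j _ => coeff_Q_top a j (γ j)

lemma eval_q (a : ℕ → k) (φ : Fin d → k) (γ : Fin d →₀ ℕ) :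
    eval φ (q a γ) = ∏ j : Fin d, ∏ l ∈ Finset.range (γ j), (φ j - a l) := by
  simp [q]

lemma eval_q_zero_iff {a : ℕ → k} (ha : Function.Injective a) (β γ : Fin d →₀ ℕ) :
    eval (fun j => a (β j)) (q a γ) = 0 ↔ ¬ γ ≤ β := by
  rw [eval_q, Finset.prod_eq_zero_iff]
  constructor
  · rintro ⟨j, -, hj⟩
    rw [Finset.prod_eq_zero_iff] at hj
    obtain ⟨l, hl, h0⟩ := hj
    rw [Finset.mem_range] at hl
    have hbl : β j = l := ha (sub_eq_zero.mp h0)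
    intro hle
    have := Finsupp.le_def.mp hle j
    omega
  · intro h
    rw [Finsupp.le_def] at h
    push_neg at h
    obtain ⟨j, hj⟩ := h
    refine ⟨j, Finset.mem_univ j, ?_⟩
    refine Finset.prod_eq_zero (Finset.mem_range.mpr hj) ?_
    simp

lemma eval_q_self_ne {a : ℕ → k} (ha : Function.Injective a) (β : Fin d →₀ ℕ) :
    eval (fun j => a (β j)) (q a β) ≠ 0 := by
  rw [eval_q]
  rw [Finset.prod_ne_zero_iff]
  intro j _
  rw [Finset.prod_ne_zero_iff]
  intro l hl
  rw [Finset.mem_range] at hl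
  exact sub_ne_zero.mpr (fun hh => absurd (ha hh) (by omega))

lemma q_mul (a : ℕ → k) {α γ : Fin d →₀ ℕ} (h : α ≤ γ) :
    q a γ = q a α * ∏ j : Fin d, ∏ l ∈ Finset.Ico (α j) (γ j), (X j - C (a l)) := by
  rw [q, q, ← Finset.prod_mul_distrib]
  refine Finset.prod_congr rfl fun j _ => ?_
  rw [Finset.range_eq_Ico, Finset.range_eq_Ico]
  exact (Finset.prod_Ico_consecutive (fun l => (X j - C (a l) : MvPolynomial (Fin d) k)) (Nat.zero_le (α j)) (Finsupp.le_def.mp h j)).symm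

lemma sum_lt_of_le {δ γ : Fin d →₀ ℕ} (hle : δ ≤ γ) (hne : δ ≠ γ) :
    (δ.sum fun _ v => v) < γ.sum fun _ v => v := by
  obtain ⟨ε, rfl⟩ := exists_add_of_le hle
  have hε : ε ≠ 0 := fun h => hne (by rw [h, add_zero])
  rw [Finsupp.sum_add_index (fun _ _ => rfl) (fun _ _ _ _ => rfl)]
  have : 0 < ε.sum fun _ v => v := by
    obtain ⟨j, hj⟩ := Finsupp.ne_iff.mp hε
    rw [Finsupp.coe_zero, Pi.zero_apply] at hj
    have hjs : j ∈ ε.support := Finsupp.mem_support_iff.mpr hj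
    calc 0 < ε j := Nat.pos_of_ne_zero hj
    _ ≤ ε.sum fun _ v => v :=
      Finset.single_le_sum (fun _ _ => Nat.zero_le _) hjs
  omega

lemma monomial_one_mem_span (a : ℕ → k) (γ : Fin d →₀ ℕ) :
    (monomial γ (1 : k)) ∈ Submodule.span k (Set.range (q a)) := by
  classical
  generalize hN : (γ.sum fun _ v => v) = N
  induction N using Nat.strong_induction_on generalizing γ with
  | _ N ih =>
  have hq : q a γ ∈ Submodule.span k (Set.range (q a)) := Submodule.subset_span ⟨γ, rfl⟩
  have hr : monomial γ (1 : k) = q a γ - (q a γ - monomial γ 1) := by ring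
  rw [hr]
  refine Submodule.sub_mem _ hq ?_
  set r := q a γ - monomial γ (1 : k) with hrdef
  have hγ : coeff γ r = 0 := by
    rw [hrdef, coeff_sub, coeff_q_self, coeff_monomial, if_pos rfl, sub_self]
  have hsupp : ∀ δ ∈ r.support, δ ≤ γ ∧ δ ≠ γ := by
    intro δ hδ
    rw [mem_support_iff] at hδ
    have hne : δ ≠ γ := fun h => hδ (h ▸ hγ)
    refine ⟨?_, hne⟩
    apply coeff_q_le (a := a)
    intro hc
    apply hδ
    rw [hrdef, coeff_sub, hc, coeff_monomial, if_neg (fun h : γ = δ => hne h.symm), sub_zero]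
  rw [show r = ∑ δ ∈ r.support, monomial δ (coeff δ r) from (support_sum_monomial_coeff r).symm]
  refine Submodule.sum_mem _ fun δ hδ => ?_
  obtain ⟨hle, hne⟩ := hsupp δ hδ
  rw [show monomial δ (coeff δ r) = coeff δ r • monomial δ (1 : k) by
    rw [smul_monomial, smul_eq_mul, mul_one]]
  exact Submodule.smul_mem _ _
    (ih (δ.sum fun _ v => v) (by rw [← hN]; exact sum_lt_of_le hle hne) δ rfl)

lemma exists_repr (a : ℕ → k) (f : MvPolynomial (Fin d) k) :
    ∃ c : (Fin d →₀ ℕ) →₀ k, f = c.sum fun γ t => t • q a γ := by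
  have hf : f ∈ Submodule.span k (Set.range (q a)) := by
    rw [show f = ∑ m ∈ f.support, monomial m (coeff m f) from
      (support_sum_monomial_coeff f).symm]
    refine Submodule.sum_mem _ fun m _ => ?_
    rw [show monomial m (coeff m f) = coeff m f • monomial m (1 : k) by
      rw [smul_monomial, smul_eq_mul, mul_one]]
    exact Submodule.smul_mem _ _ (monomial_one_mem_span a m)
  obtain ⟨c, hc⟩ := (Finsupp.mem_span_range_iff_exists_finsupp).mp hf
  exact ⟨c, hc.symm⟩

lemma coeff_repr (a : ℕ → k) (c : (Fin d →₀ ℕ) →₀ k) (μ : Fin d →₀ ℕ)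
    (hmax : ∀ γ ∈ c.support, μ ≤ γ → γ = μ) :
    coeff μ (c.sum fun γ t => t • q a γ) = c μ := by
  classical
  rw [Finsupp.sum, coeff_sum]
  rw [Finset.sum_eq_single μ]
  · rw [coeff_smul, coeff_q_self, smul_eq_mul, mul_one]
  · intro γ hγ hne
    rw [coeff_smul, smul_eq_mul]
    by_cases hc : coeff μ (q a γ) = 0
    · rw [hc, mul_zero]
    · exact absurd (hmax γ hγ (coeff_q_le hc)) hne
  · intro hμ
    rw [Finsupp.notMem_support_iff.mp hμ, zero_smul, coeff_zero]

lemma coeff_repr_exists {a : ℕ → k} {c : (Fin d →₀ ℕ) →₀ k} {μ : Fin d →₀ ℕ}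
    (h : coeff μ (c.sum fun γ t => t • q a γ) ≠ 0) :
    ∃ γ ∈ c.support, μ ≤ γ := by
  classical
  rw [Finsupp.sum, coeff_sum] at h
  obtain ⟨γ, hγ, hne⟩ := Finset.exists_ne_zero_of_sum_ne_zero h
  rw [coeff_smul, smul_eq_mul] at hne
  exact ⟨γ, hγ, coeff_q_le (fun hc => hne (by rw [hc, mul_zero]))⟩

lemma eval_repr (a : ℕ → k) (c : (Fin d →₀ ℕ) →₀ k) (φ : Fin d → k) :
    eval φ (c.sum fun γ t => t • q a γ) = c.sum fun γ t => t * eval φ (q a γ) := by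
  rw [Finsupp.sum, Finsupp.sum, map_sum]
  refine Finset.sum_congr rfl fun γ _ => ?_
  rw [smul_eq_C_mul, map_mul, eval_C]

lemma repr_vanish_eq_zero {a : ℕ → k} (ha : Function.Injective a)
    (c : (Fin d →₀ ℕ) →₀ k)
    (hvan : ∀ β ∈ c.support, eval (fun j => a (β j)) (c.sum fun γ t => t • q a γ) = 0) :
    c = 0 := by
  classical
  by_contra hc
  have hne : (↑c.support : Set (Fin d →₀ ℕ)).Nonempty := by
    rw [Finset.coe_nonempty, Finsupp.support_nonempty_iff]
    exact hc
  obtain ⟨μ, hμ, hmin⟩ : ∃ μ ∈ (c.support : Set (Fin d →₀ ℕ)),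
      ∀ γ ∈ (c.support : Set (Fin d →₀ ℕ)), id γ ≤ id μ → id μ = id γ := by
    obtain ⟨μ, hμ, hmin⟩ :=
      Set.Finite.exists_minimalFor id _ (c.support : Set (Fin d →₀ ℕ)).toFinite hne
    exact ⟨μ, hμ, fun γ hγ hle => le_antisymm (hmin hγ hle) hle⟩
  simp only [id] at hmin
  have hμs : μ ∈ c.support := hμ
  have h0 := hvan μ hμs
  rw [eval_repr, Finsupp.sum] at h0
  rw [Finset.sum_eq_single μ] at h0
  · exact (mul_ne_zero (Finsupp.mem_support_iff.mp hμs) (eval_q_self_ne ha μ)) h0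
  · intro γ hγ hne
    by_cases he : eval (fun j => a (μ j)) (q a γ) = 0
    · rw [he, mul_zero]
    · have hle : γ ≤ μ := by
        by_contra hh
        exact he ((eval_q_zero_iff ha μ γ).mpr hh)
      exact absurd (hmin γ hγ hle).symm hne
  · intro h
    exact absurd hμs h

lemma monomial_one_mem_iff (A : Finset (Fin d →₀ ℕ)) (I : Ideal (MvPolynomial (Fin d) k))
    (hI : I = Ideal.span ((fun α : Fin d →₀ ℕ => (monomial α (1 : k))) '' A))
    (β : Fin d →₀ ℕ) :
    monomial β (1 : k) ∈ I ↔ ∃ α ∈ A, α ≤ β := by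
  classical
  rw [hI, mem_ideal_span_monomial_image]
  constructor
  · intro h
    refine h β ?_
    rw [support_monomial, if_neg one_ne_zero]
    exact Finset.mem_singleton_self β
  · intro h m hm
    rw [support_monomial, if_neg one_ne_zero, Finset.mem_singleton] at hm
    exact hm ▸ h

lemma finrank_quot (A : Finset (Fin d →₀ ℕ)) (I : Ideal (MvPolynomial (Fin d) k))
    (hI : I = Ideal.span ((fun α : Fin d →₀ ℕ => (monomial α (1 : k))) '' A)) :
    Module.finrank k (MvPolynomial (Fin d) k ⧸ I)
      = Set.ncard {β : Fin d →₀ ℕ | (monomial β (1 : k)) ∉ I} := by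
  classical
  set Std : Set (Fin d →₀ ℕ) := {β : Fin d →₀ ℕ | (monomial β (1 : k)) ∉ I} with hStd
  set v : Std → (MvPolynomial (Fin d) k ⧸ I) :=
    fun β => Ideal.Quotient.mk I (monomial (↑β) (1 : k)) with hv
  have hli : LinearIndependent k v := by
    rw [linearIndependent_iff]
    intro l hl
    set g : MvPolynomial (Fin d) k := l.sum fun β c => c • monomial (↑β) (1 : k) with hg
    have hmk : (Ideal.Quotient.mkₐ k I) g = 0 := by
      rw [hg, map_finsuppSum]
      rw [Finsupp.linearCombination_apply] at hl
      rw [← hl]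
      refine Finsupp.sum_congr fun β _ => ?_
      rw [map_smul, Ideal.Quotient.mkₐ_eq_mk]
    have hgI : g ∈ I := by
      rw [Ideal.Quotient.mkₐ_eq_mk] at hmk
      exact Ideal.Quotient.eq_zero_iff_mem.mp hmk
    have hcoeff : ∀ β0 : Std, coeff (↑β0) g = l β0 := by
      intro β0
      rw [hg, Finsupp.sum, coeff_sum]
      rw [Finset.sum_eq_single β0]
      · rw [coeff_smul, coeff_monomial, if_pos rfl, smul_eq_mul, mul_one]
      · intro β hβ hne
        rw [coeff_smul, coeff_monomial, if_neg (fun hh => hne (Subtype.ext hh)), smul_zero]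
      · intro h
        rw [Finsupp.notMem_support_iff.mp h, zero_smul, coeff_zero]
    ext β0
    rw [Finsupp.coe_zero, Pi.zero_apply]
    by_contra hne
    have hβ0 : (↑β0 : Fin d →₀ ℕ) ∈ g.support :=
      mem_support_iff.mpr (by rw [hcoeff β0]; exact hne)
    rw [hI, mem_ideal_span_monomial_image] at hgI
    obtain ⟨α, hα, hle⟩ := hgI _ hβ0
    exact β0.2 ((monomial_one_mem_iff A I hI β0).mpr ⟨α, hα, hle⟩)
  have hsp : ⊤ ≤ Submodule.span k (Set.range v) := by
    rintro x -
    obtain ⟨f, rfl⟩ := Ideal.Quotient.mk_surjective x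
    rw [show f = ∑ m ∈ f.support, monomial m (coeff m f) from
      (support_sum_monomial_coeff f).symm, map_sum]
    refine Submodule.sum_mem _ fun m _ => ?_
    by_cases hm : monomial m (1 : k) ∈ I
    · have hmem : monomial m (coeff m f) ∈ I := by
        rw [show monomial m (coeff m f) = C (coeff m f) * monomial m 1 by
          rw [C_mul_monomial, mul_one]]
        exact Ideal.mul_mem_left _ _ hm
      rw [Ideal.Quotient.eq_zero_iff_mem.mpr hmem]
      exact Submodule.zero_mem _
    · have heq : Ideal.Quotient.mk I (monomial m (coeff m f)) = coeff m f • v ⟨m, hm⟩ := by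
        rw [show monomial m (coeff m f) = coeff m f • monomial m (1 : k) by
          rw [smul_monomial, smul_eq_mul, mul_one]]
        rw [← Ideal.Quotient.mkₐ_eq_mk k I, map_smul]
        rfl
      rw [heq]
      exact Submodule.smul_mem _ _ (Submodule.subset_span ⟨⟨m, hm⟩, rfl⟩)
  let b : Module.Basis Std k (MvPolynomial (Fin d) k ⧸ I) := Module.Basis.mk hli hsp
  calc Module.finrank k (MvPolynomial (Fin d) k ⧸ I)
      = (Module.rank k (MvPolynomial (Fin d) k ⧸ I)).toNat := rfl
    _ = ((Module.rank k (MvPolynomial (Fin d) k ⧸ I)).lift).toNat :=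
        (Cardinal.toNat_lift _).symm
    _ = ((Cardinal.mk Std).lift).toNat := by rw [← b.mk_eq_rank]
    _ = (Cardinal.mk Std).toNat := Cardinal.toNat_lift _
    _ = Nat.card Std := rfl
    _ = Std.ncard := Nat.card_coe_set_eq Std

end Stmt6Aux

open Stmt6Aux in

theorem stmt6 (k : Type*) [Field k] [IsAlgClosed k] (d n : ℕ)
    (A : Finset (Fin d →₀ ℕ))
    (I : Ideal (MvPolynomial (Fin d) k))
    (hI : I = Ideal.span ((fun α : Fin d →₀ ℕ => (monomial α (1 : k))) '' A))
    (hn : Module.finrank k (MvPolynomial (Fin d) k ⧸ I) = n)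
    (a : ℕ → k) (ha : Function.Injective a)
    (J : Ideal (MvPolynomial (Fin d) k))
    (hJ : J = Ideal.span ((fun α : Fin d →₀ ℕ =>
      ∏ j : Fin d, ∏ l ∈ Finset.range (α j), (X j - C (a l))) '' A)) :
    -- the points indexed by the standard monomials of `I` are distinct,
    Set.InjOn (fun (β : Fin d →₀ ℕ) (j : Fin d) => a (β j))
      {β | (monomial β (1 : k)) ∉ I} ∧
    -- and there are `n` of them;
    Set.ncard {β : Fin d →₀ ℕ | (monomial β (1 : k)) ∉ I} = n ∧
    -- `J` is the radical vanishing ideal of these `n` distinct points;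
    (∀ f : MvPolynomial (Fin d) k, f ∈ J ↔
      ∀ β : Fin d →₀ ℕ, (monomial β (1 : k)) ∉ I →
        eval (fun j : Fin d => a (β j)) f = 0) ∧
    -- and `in(J) = I` for every global term order.
    (∀ lo : LinearOrder (Fin d →₀ ℕ),
      (∀ u v w : Fin d →₀ ℕ, lo.le u v → lo.le (u + w) (v + w)) →
      (∀ u : Fin d →₀ ℕ, lo.le 0 u) →
      Ideal.span {g | ∃ f : MvPolynomial (Fin d) k, ∃ hf : f ∈ J ∧ f ≠ 0,
        g = (monomial (@Finset.max' _ lo f.support (support_nonempty.mpr hf.2))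
              (coeff (@Finset.max' _ lo f.support (support_nonempty.mpr hf.2)) f))} = I) := by
  classical
  have hstd : ∀ β : Fin d →₀ ℕ, monomial β (1 : k) ∈ I ↔ ∃ α ∈ A, α ≤ β :=
    monomial_one_mem_iff A I hI
  have hJq : J = Ideal.span (q a '' A) := hJ
  -- q of a non-standard exponent lies in J
  have hqJ : ∀ γ : Fin d →₀ ℕ, (∃ α ∈ A, α ≤ γ) → q a γ ∈ J := by
    rintro γ ⟨α, hα, hle⟩
    rw [q_mul a hle]
    exact Ideal.mul_mem_right _ _ (by rw [hJq]; exact Ideal.subset_span ⟨α, hα, rfl⟩)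
  -- elements of J vanish at standard points
  have hJvan : ∀ f ∈ J, ∀ β : Fin d →₀ ℕ, monomial β (1 : k) ∉ I →
      eval (fun j : Fin d => a (β j)) f = 0 := by
    intro f hf β hβ
    have hβ' : ∀ α ∈ A, ¬ α ≤ β := fun α hα hle => hβ ((hstd β).mpr ⟨α, hα, hle⟩)
    rw [hJq, Ideal.span] at hf
    refine Submodule.span_induction ?_ ?_ ?_ ?_ hf
    · rintro x ⟨α, hα, rfl⟩
      exact (eval_q_zero_iff ha β α).mpr (hβ' α hα)
    · exact map_zero _
    · intro x y _ _ h1 h2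
      rw [map_add, h1, h2, add_zero]
    · intro r x _ h1
      rw [smul_eq_mul, map_mul, h1, mul_zero]
  -- vanishing implies a representation supported on non-standard exponents
  have main : ∀ f : MvPolynomial (Fin d) k,
      (∀ β : Fin d →₀ ℕ, monomial β (1 : k) ∉ I → eval (fun j : Fin d => a (β j)) f = 0) →
      ∃ c : (Fin d →₀ ℕ) →₀ k, f = (c.sum fun γ t => t • q a γ) ∧
        ∀ γ ∈ c.support, ∃ α ∈ A, α ≤ γ := by
    intro f hvan
    obtain ⟨c, hc⟩ := exists_repr a f
    set p : (Fin d →₀ ℕ) → Prop := fun γ => ∃ α ∈ A, α ≤ γ with hp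
    set cN := c.filter p with hcN
    set cS := c.filter (fun γ => ¬ p γ) with hcS
    have hsplit : cN + cS = c := by
      rw [hcN, hcS]
      exact Finsupp.filter_pos_add_filter_neg c p
    have hsum : f = (cN.sum fun γ t => t • q a γ) + (cS.sum fun γ t => t • q a γ) := by
      rw [hc, ← hsplit]
      exact Finsupp.sum_add_index' (fun γ => by simp) (fun γ t1 t2 => add_smul t1 t2 _)
    have hNmem : ∀ γ ∈ cN.support, p γ := by
      intro γ hγ
      rw [hcN, Finsupp.support_filter, Finset.mem_filter] at hγ
      exact hγ.2
    have hNJ : (cN.sum fun γ t => t • q a γ) ∈ J := by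
      refine Submodule.sum_mem _ fun γ hγ => ?_
      show (cN γ) • q a γ ∈ J
      rw [smul_eq_C_mul]
      exact Ideal.mul_mem_left _ _ (hqJ γ (hNmem γ hγ))
    have hSvan : ∀ β ∈ cS.support, eval (fun j : Fin d => a (β j))
        (cS.sum fun γ t => t • q a γ) = 0 := by
      intro β hβ
      have hβp : ¬ p β := by
        rw [hcS, Finsupp.support_filter, Finset.mem_filter] at hβ
        exact hβ.2
      have hβstd : monomial β (1 : k) ∉ I := fun hmem => hβp ((hstd β).mp hmem)
      have h1 := hvan β hβstd
      have h2 := hJvan _ hNJ β hβstd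
      have h3 := congrArg (eval fun j : Fin d => a (β j)) hsum
      rw [map_add, h1, h2, zero_add] at h3
      exact h3.symm
    have hS0 : cS = 0 := repr_vanish_eq_zero ha cS hSvan
    refine ⟨cN, ?_, hNmem⟩
    rw [hsum, hS0, Finsupp.sum_zero_index, add_zero]
  refine ⟨?_, ?_, ?_, ?_⟩
  · -- distinctness
    intro β _ β' _ h
    ext j
    exact ha (congrFun h j)
  · -- cardinality
    rw [← hn]
    exact (finrank_quot A I hI).symm
  · -- vanishing ideal
    intro f
    constructor
    · exact hJvan f
    · intro hvan
      obtain ⟨c, hc, hcsupp⟩ := main f hvan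
      rw [hc]
      refine Submodule.sum_mem _ fun γ hγ => ?_
      show (c γ) • q a γ ∈ J
      rw [smul_eq_C_mul]
      exact Ideal.mul_mem_left _ _ (hqJ γ (hcsupp γ hγ))
  · -- initial ideal
    intro lo hadd hzero
    have lo_of_le : ∀ {u v : Fin d →₀ ℕ}, u ≤ v → lo.le u v := by
      intro u v h
      obtain ⟨w, rfl⟩ := exists_add_of_le h
      have h1 := hadd 0 w u (hzero w)
      rwa [zero_add, add_comm w u] at h1
    apply le_antisymm
    · -- in(J) ≤ I
      refine Ideal.span_le.mpr ?_
      rintro g ⟨f, ⟨hfJ, hf0⟩, rfl⟩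
      set μ := @Finset.max' _ lo f.support (support_nonempty.mpr hf0) with hμdef
      obtain ⟨c, hcf, hcsupp⟩ := main f (fun β hβ => hJvan f hfJ β hβ)
      have hc0 : c ≠ 0 := by
        rintro rfl
        rw [Finsupp.sum_zero_index] at hcf
        exact hf0 hcf
      have hTne : c.support.Nonempty := Finsupp.support_nonempty_iff.mpr hc0
      set ν := @Finset.max' _ lo c.support hTne with hνdef
      have hν_mem : ν ∈ c.support := @Finset.max'_mem _ lo c.support hTne
      have hcoeffν : coeff ν f = c ν := by
        rw [hcf]
        apply coeff_repr
        intro γ hγ hle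
        exact lo.le_antisymm _ _ (@Finset.le_max' _ lo c.support γ hγ) (lo_of_le hle)
      have hν_mem_f : ν ∈ f.support :=
        mem_support_iff.mpr (by rw [hcoeffν]; exact Finsupp.mem_support_iff.mp hν_mem)
      have hνμ : lo.le ν μ := @Finset.le_max' _ lo f.support ν hν_mem_f
      have hμ_mem : μ ∈ f.support := @Finset.max'_mem _ lo f.support _
      have hμν : lo.le μ ν := by
        have hcoefμ : coeff μ f ≠ 0 := mem_support_iff.mp hμ_mem
        rw [hcf] at hcoefμ
        obtain ⟨γ, hγ, hle⟩ := coeff_repr_exists hcoefμ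
        exact lo.le_trans _ _ _ (lo_of_le hle) (@Finset.le_max' _ lo c.support γ hγ)
      have hμν' : μ = ν := lo.le_antisymm _ _ hμν hνμ
      obtain ⟨α, hα, hαle⟩ := hcsupp ν hν_mem
      rw [hμν']
      rw [show monomial ν (coeff ν f) = monomial α (1 : k) * monomial (ν - α) (coeff ν f) by
        rw [monomial_mul, one_mul, add_tsub_cancel_of_le hαle]]
      rw [hI]
      exact Ideal.mul_mem_right _ _ (Ideal.subset_span ⟨α, hα, rfl⟩)
    · -- I ≤ in(J)
      rw [hI]
      refine Ideal.span_le.mpr ?_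
      rintro g ⟨α, hα, rfl⟩
      have hfJ : q a α ∈ J := hqJ α ⟨α, hα, le_refl α⟩
      have hf0 : q a α ≠ 0 := fun h =>
        one_ne_zero (by rw [← coeff_q_self a α, h, coeff_zero])
      have hαsupp : α ∈ (q a α).support :=
        mem_support_iff.mpr (by rw [coeff_q_self]; exact one_ne_zero)
      have hmax : @Finset.max' _ lo (q a α).support (support_nonempty.mpr hf0) = α := by
        refine lo.le_antisymm _ _ ?_ (@Finset.le_max' _ lo _ α hαsupp)
        refine @Finset.max'_le _ lo _ _ α fun δ hδ => ?_
        exact lo_of_le (coeff_q_le (mem_support_iff.mp hδ))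
      apply Ideal.subset_span
      refine ⟨q a α, ⟨hfJ, hf0⟩, ?_⟩
      rw [hmax, coeff_q_self]
end

section
/- Let k be a field of characteristic not 2 or 3, S = k[x_1,x_2,x_3], and I = ⟨x_1^2, x_1x_2, x_1x_3, x_2x_3, x_3^3 − x_2^4⟩. Then I = in_{(1,0,0)}(J) where J = ⟨x_1+1, x_2, x_3⟩ ∩ ⟨x_1, x_2x_3, x_3^3 − x_2^4⟩, and both I and J have colength 8 in S. -/
open MvPolynomial

/-- The weight of a monomial exponent `α` with respect to a weight vector `w`. -/
def wDeg {d : ℕ} (w : Fin d → ℕ) (α : Fin d →₀ ℕ) : ℕ :=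
  α.sum fun i n => w i * n

/-- The leading form of `f` for the weight vector `w`:
the sum of the terms of maximal `w`-weight. -/
noncomputable def leadForm {k : Type*} [Field k] {d : ℕ} (w : Fin d → ℕ)
    (f : MvPolynomial (Fin d) k) : MvPolynomial (Fin d) k :=
  ∑ α ∈ f.support.filter (fun α => wDeg w α = f.support.sup (wDeg w)),
    monomial α (coeff α f)

/-- The initial ideal of `J` with respect to the weight vector `w`. -/
noncomputable def initialIdealW {k : Type*} [Field k] {d : ℕ} (w : Fin d → ℕ)
    (J : Ideal (MvPolynomial (Fin d) k)) : Ideal (MvPolynomial (Fin d) k) :=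
  Ideal.span {g | ∃ f ∈ J, f ≠ 0 ∧ g = leadForm w f}

namespace Aux
variable {k : Type*} [Field k]

local notation "S" => MvPolynomial (Fin 3) k

lemma wdeg_eq (α : Fin 3 →₀ ℕ) : wDeg ![1,0,0] α = α 0 := by
  rw [wDeg, Finsupp.sum_fintype _ _ (fun i => mul_zero _), Fin.sum_univ_three]
  simp

lemma leadForm_eq_self {w : Fin 3 → ℕ} {f : S}
    (h : ∀ α ∈ f.support, wDeg w α = f.support.sup (wDeg w)) : leadForm w f = f := by
  rw [leadForm, Finset.filter_true_of_mem h, support_sum_monomial_coeff]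

lemma leadForm_of_supp_singleton {w : Fin 3 → ℕ} {f : S} {β : Fin 3 →₀ ℕ}
    (h : f.support = {β}) : leadForm w f = f := by
  refine leadForm_eq_self ?_
  intro α hα
  rw [h] at hα ⊢
  rw [Finset.mem_singleton] at hα
  subst hα
  rw [Finset.sup_singleton]

lemma leadForm_x0free {f : S} (h : ∀ α ∈ f.support, α 0 = 0) :
    leadForm ![1,0,0] f = f := by
  have hsup : f.support.sup (wDeg ![1,0,0]) = 0 := by
    refine Nat.le_zero.mp (Finset.sup_le fun α hα => ?_)
    rw [wdeg_eq, h α hα]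
  refine leadForm_eq_self fun α hα => ?_
  rw [wdeg_eq, h α hα, hsup]

-- X_i * X_j as monomial
lemma X_mul_X (i j : Fin 3) :
    (X i * X j : S) = monomial (Finsupp.single i 1 + Finsupp.single j 1) 1 := by
  rw [show (X i : S) = monomial (Finsupp.single i 1) 1 from rfl,
    show (X j : S) = monomial (Finsupp.single j 1) 1 from rfl, monomial_mul, one_mul]

lemma supp_X_mul_X (i j : Fin 3) :
    (X i * X j : S).support = {Finsupp.single i 1 + Finsupp.single j 1} := by
  classical
  rw [X_mul_X, support_monomial, if_neg (one_ne_zero)]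

lemma ne_zero_of_supp_singleton {f : S} {β : Fin 3 →₀ ℕ} (h : f.support = {β}) : f ≠ 0 := by
  intro h0
  rw [h0, support_zero] at h
  exact absurd h.symm (Finset.singleton_ne_empty β)

lemma supp_bin (α : Fin 3 →₀ ℕ) (hα : α ∈ (X 2 ^ 3 - X 1 ^ 4 : S).support) :
    α = Finsupp.single 2 3 ∨ α = Finsupp.single 1 4 := by
  classical
  rw [mem_support_iff, coeff_sub, coeff_X_pow, coeff_X_pow] at hα
  by_contra h
  push_neg at h
  rw [if_neg (fun he => h.1 he.symm), if_neg (fun he => h.2 he.symm)] at hα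
  simp at hα

lemma bin_ne_zero : (X 2 ^ 3 - X 1 ^ 4 : S) ≠ 0 := by
  classical
  intro h0
  have := congrArg (coeff (Finsupp.single 2 3)) h0
  rw [coeff_sub, coeff_X_pow, coeff_X_pow, if_pos rfl,
    if_neg (by simp [Finsupp.single_eq_single_iff]), coeff_zero] at this
  simp at this

lemma monomial_mem_of_le {L : Ideal S} {γ α : Fin 3 →₀ ℕ} {c : k}
    (hg : monomial γ 1 ∈ L) (hle : γ ≤ α) : monomial α c ∈ L := by
  have : monomial α c = monomial (α - γ) c * monomial γ 1 := by
    rw [monomial_mul, mul_one, tsub_add_cancel_of_le hle]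
  rw [this]
  exact L.mul_mem_left _ hg


/-! ### The ideals -/

section Ideals
variable (k)

noncomputable def Ig : Ideal S :=
  Ideal.span {X 0 ^ 2, X 0 * X 1, X 0 * X 2, X 1 * X 2, X 2 ^ 3 - X 1 ^ 4}

noncomputable def J1 : Ideal S := Ideal.span {X 0 + 1, X 1, X 2}

noncomputable def J2 : Ideal S := Ideal.span {X 0, X 1 * X 2, X 2 ^ 3 - X 1 ^ 4}

end Ideals

lemma mem_Ig_sq : (X 0 ^ 2 : S) ∈ Ig k := Ideal.subset_span (by left; rfl)
lemma mem_Ig_01 : (X 0 * X 1 : S) ∈ Ig k := Ideal.subset_span (by right; left; rfl)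
lemma mem_Ig_02 : (X 0 * X 2 : S) ∈ Ig k := Ideal.subset_span (by right; right; left; rfl)
lemma mem_Ig_12 : (X 1 * X 2 : S) ∈ Ig k := Ideal.subset_span (by right; right; right; left; rfl)
lemma mem_Ig_bin : (X 2 ^ 3 - X 1 ^ 4 : S) ∈ Ig k :=
  Ideal.subset_span (by right; right; right; right; rfl)

lemma mem_J_01 : (X 0 * X 1 : S) ∈ J1 k ⊓ J2 k := by
  constructor
  · exact Ideal.mul_mem_left _ _ (Ideal.subset_span (by right; left; rfl))
  · rw [mul_comm]
    exact Ideal.mul_mem_left _ _ (Ideal.subset_span (by left; rfl))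

lemma mem_J_02 : (X 0 * X 2 : S) ∈ J1 k ⊓ J2 k := by
  constructor
  · exact Ideal.mul_mem_left _ _ (Ideal.subset_span (by right; right; rfl))
  · rw [mul_comm]
    exact Ideal.mul_mem_left _ _ (Ideal.subset_span (by left; rfl))

lemma mem_J_12 : (X 1 * X 2 : S) ∈ J1 k ⊓ J2 k := by
  constructor
  · exact Ideal.mul_mem_left _ _ (Ideal.subset_span (by right; right; rfl))
  · exact Ideal.subset_span (by right; left; rfl)

lemma mem_J_bin : (X 2 ^ 3 - X 1 ^ 4 : S) ∈ J1 k ⊓ J2 k := by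
  constructor
  · refine sub_mem ?_ ?_
    · have : (X 2 ^ 3 : S) = X 2 ^ 2 * X 2 := by ring
      rw [this]
      exact Ideal.mul_mem_left _ _ (Ideal.subset_span (by right; right; rfl))
    · have : (X 1 ^ 4 : S) = X 1 ^ 3 * X 1 := by ring
      rw [this]
      exact Ideal.mul_mem_left _ _ (Ideal.subset_span (by right; left; rfl))
  · exact Ideal.subset_span (by right; right; rfl)

lemma mem_J_sq : (X 0 ^ 2 + X 0 : S) ∈ J1 k ⊓ J2 k := by
  constructor
  · have : (X 0 ^ 2 + X 0 : S) = X 0 * (X 0 + 1) := by ring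
    rw [this]
    exact Ideal.mul_mem_left _ _ (Ideal.subset_span (by left; rfl))
  · have : (X 0 ^ 2 + X 0 : S) = (X 0 + 1) * X 0 := by ring
    rw [this]
    exact Ideal.mul_mem_left _ _ (Ideal.subset_span (by left; rfl))

/-! ### Vanishing linear functionals on a span -/

lemma vanish_on_span {G : Set S} {lam : S → k}
    (hadd : ∀ a b, lam (a + b) = lam a + lam b) (h0 : lam 0 = 0)
    (h : ∀ g ∈ G, ∀ p, lam (p * g) = 0) : ∀ f ∈ Ideal.span G, lam f = 0 := by
  have key : ∀ f ∈ Ideal.span G, ∀ p, lam (p * f) = 0 := by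
    intro f hf
    refine Submodule.span_induction (fun x hx => h x hx) (fun p => by rw [mul_zero]; exact h0)
      (fun x y _ _ hx hy p => by rw [mul_add, hadd, hx, hy, add_zero]) ?_ hf
    intro a x _ hx p
    rw [smul_eq_mul, ← mul_assoc]
    exact hx (p * a)
  intro f hf
  have := key f hf 1
  rwa [one_mul] at this

lemma coeff_mul_mono {β γ : Fin 3 →₀ ℕ} (h : ¬ γ ≤ β) (p : S) (c : k) :
    coeff β (p * monomial γ c) = 0 := by
  classical
  rw [coeff_mul_monomial', if_neg h]

lemma not_le_of_lt_at {γ β : Fin 3 →₀ ℕ} (i : Fin 3) (h : β i < γ i) : ¬ γ ≤ β :=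
  fun hle => absurd (Finsupp.le_def.mp hle i) (not_le.mpr h)


lemma coeff_vanish_Ig {β : Fin 3 →₀ ℕ}
    (h1 : ¬ Finsupp.single 0 2 ≤ β)
    (h2 : ¬ Finsupp.single 0 1 + Finsupp.single 1 1 ≤ β)
    (h3 : ¬ Finsupp.single 0 1 + Finsupp.single 2 1 ≤ β)
    (h4 : ¬ Finsupp.single 1 1 + Finsupp.single 2 1 ≤ β)
    (h5 : ¬ Finsupp.single 2 3 ≤ β)
    (h6 : ¬ Finsupp.single 1 4 ≤ β) :
    ∀ f ∈ Ig k, coeff β f = 0 := by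
  refine vanish_on_span (fun a b => coeff_add β a b) (coeff_zero β) ?_
  intro g hg p
  simp only [Set.mem_insert_iff, Set.mem_singleton_iff] at hg
  rcases hg with rfl|rfl|rfl|rfl|rfl
  · rw [X_pow_eq_monomial]; exact coeff_mul_mono h1 p 1
  · rw [X_mul_X]; exact coeff_mul_mono h2 p 1
  · rw [X_mul_X]; exact coeff_mul_mono h3 p 1
  · rw [X_mul_X]; exact coeff_mul_mono h4 p 1
  · rw [mul_sub, coeff_sub, X_pow_eq_monomial, X_pow_eq_monomial,
      coeff_mul_mono h5 p 1, coeff_mul_mono h6 p 1, sub_zero]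

lemma coeff_vanish_J2 {β : Fin 3 →₀ ℕ}
    (h1 : ¬ Finsupp.single 0 1 ≤ β)
    (h4 : ¬ Finsupp.single 1 1 + Finsupp.single 2 1 ≤ β)
    (h5 : ¬ Finsupp.single 2 3 ≤ β)
    (h6 : ¬ Finsupp.single 1 4 ≤ β) :
    ∀ f ∈ J2 k, coeff β f = 0 := by
  refine vanish_on_span (fun a b => coeff_add β a b) (coeff_zero β) ?_
  intro g hg p
  simp only [Set.mem_insert_iff, Set.mem_singleton_iff] at hg
  rcases hg with rfl|rfl|rfl
  · rw [show (X 0 : S) = monomial (Finsupp.single 0 1) 1 from rfl]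
    exact coeff_mul_mono h1 p 1
  · rw [X_mul_X]; exact coeff_mul_mono h4 p 1
  · rw [mul_sub, coeff_sub, X_pow_eq_monomial, X_pow_eq_monomial,
      coeff_mul_mono h5 p 1, coeff_mul_mono h6 p 1, sub_zero]

lemma coeff_mul_mono_self (β : Fin 3 →₀ ℕ) (p : S) :
    coeff β (p * monomial β (1:k)) = coeff 0 p := by
  classical
  rw [coeff_mul_monomial', if_pos le_rfl, tsub_self, mul_one]

lemma coeff_comb_vanish_Ig :
    ∀ f ∈ Ig k, coeff (Finsupp.single 2 3) f + coeff (Finsupp.single 1 4) f = 0 := by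
  refine vanish_on_span (fun a b => by rw [coeff_add, coeff_add]; ring)
    (by rw [coeff_zero, coeff_zero, add_zero]) ?_
  intro g hg p
  simp only [Set.mem_insert_iff, Set.mem_singleton_iff] at hg
  have n1 : ¬ Finsupp.single (0:Fin 3) 2 ≤ Finsupp.single 2 3 :=
    not_le_of_lt_at 0 (by simp [Finsupp.single_apply])
  have n1' : ¬ Finsupp.single (0:Fin 3) 2 ≤ Finsupp.single 1 4 :=
    not_le_of_lt_at 0 (by simp [Finsupp.single_apply])
  have n2 : ¬ Finsupp.single (0:Fin 3) 1 + Finsupp.single 1 1 ≤ Finsupp.single 2 3 :=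
    not_le_of_lt_at 0 (by simp [Finsupp.single_apply])
  have n2' : ¬ Finsupp.single (0:Fin 3) 1 + Finsupp.single 1 1 ≤ Finsupp.single 1 4 :=
    not_le_of_lt_at 0 (by simp [Finsupp.single_apply])
  have n3 : ¬ Finsupp.single (0:Fin 3) 1 + Finsupp.single 2 1 ≤ Finsupp.single 2 3 :=
    not_le_of_lt_at 0 (by simp [Finsupp.single_apply])
  have n3' : ¬ Finsupp.single (0:Fin 3) 1 + Finsupp.single 2 1 ≤ Finsupp.single 1 4 :=
    not_le_of_lt_at 0 (by simp [Finsupp.single_apply])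
  have n4 : ¬ Finsupp.single (1:Fin 3) 1 + Finsupp.single 2 1 ≤ Finsupp.single 2 3 :=
    not_le_of_lt_at 1 (by simp [Finsupp.single_apply])
  have n4' : ¬ Finsupp.single (1:Fin 3) 1 + Finsupp.single 2 1 ≤ Finsupp.single 1 4 :=
    not_le_of_lt_at 2 (by simp [Finsupp.single_apply])
  have n5 : ¬ Finsupp.single (2:Fin 3) 3 ≤ Finsupp.single 1 4 :=
    not_le_of_lt_at 2 (by simp [Finsupp.single_apply])
  have n6 : ¬ Finsupp.single (1:Fin 3) 4 ≤ Finsupp.single 2 3 :=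
    not_le_of_lt_at 1 (by simp [Finsupp.single_apply])
  rcases hg with rfl|rfl|rfl|rfl|rfl
  · rw [X_pow_eq_monomial, coeff_mul_mono n1 p 1, coeff_mul_mono n1' p 1, add_zero]
  · rw [X_mul_X, coeff_mul_mono n2 p 1, coeff_mul_mono n2' p 1, add_zero]
  · rw [X_mul_X, coeff_mul_mono n3 p 1, coeff_mul_mono n3' p 1, add_zero]
  · rw [X_mul_X, coeff_mul_mono n4 p 1, coeff_mul_mono n4' p 1, add_zero]
  · rw [mul_sub, coeff_sub, coeff_sub, X_pow_eq_monomial, X_pow_eq_monomial,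
      coeff_mul_mono_self, coeff_mul_mono n6 p 1, coeff_mul_mono n5 p 1,
      coeff_mul_mono_self]
    ring

lemma coeff_comb_vanish_J2 :
    ∀ f ∈ J2 k, coeff (Finsupp.single 2 3) f + coeff (Finsupp.single 1 4) f = 0 := by
  refine vanish_on_span (fun a b => by rw [coeff_add, coeff_add]; ring)
    (by rw [coeff_zero, coeff_zero, add_zero]) ?_
  intro g hg p
  simp only [Set.mem_insert_iff, Set.mem_singleton_iff] at hg
  have n1 : ¬ Finsupp.single (0:Fin 3) 1 ≤ Finsupp.single 2 3 :=
    not_le_of_lt_at 0 (by simp [Finsupp.single_apply])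
  have n1' : ¬ Finsupp.single (0:Fin 3) 1 ≤ Finsupp.single 1 4 :=
    not_le_of_lt_at 0 (by simp [Finsupp.single_apply])
  have n4 : ¬ Finsupp.single (1:Fin 3) 1 + Finsupp.single 2 1 ≤ Finsupp.single 2 3 :=
    not_le_of_lt_at 1 (by simp [Finsupp.single_apply])
  have n4' : ¬ Finsupp.single (1:Fin 3) 1 + Finsupp.single 2 1 ≤ Finsupp.single 1 4 :=
    not_le_of_lt_at 2 (by simp [Finsupp.single_apply])
  have n5 : ¬ Finsupp.single (2:Fin 3) 3 ≤ Finsupp.single 1 4 :=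
    not_le_of_lt_at 2 (by simp [Finsupp.single_apply])
  have n6 : ¬ Finsupp.single (1:Fin 3) 4 ≤ Finsupp.single 2 3 :=
    not_le_of_lt_at 1 (by simp [Finsupp.single_apply])
  rcases hg with rfl|rfl|rfl
  · rw [show (X 0 : S) = monomial (Finsupp.single 0 1) 1 from rfl,
      coeff_mul_mono n1 p 1, coeff_mul_mono n1' p 1, add_zero]
  · rw [X_mul_X, coeff_mul_mono n4 p 1, coeff_mul_mono n4' p 1, add_zero]
  · rw [mul_sub, coeff_sub, coeff_sub, X_pow_eq_monomial, X_pow_eq_monomial,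
      coeff_mul_mono_self, coeff_mul_mono n6 p 1, coeff_mul_mono n5 p 1,
      coeff_mul_mono_self]
    ring


lemma ev1_vanish : ∀ f ∈ J1 k, eval ![(-1:k),0,0] f = 0 := by
  intro f hf
  have : J1 k ≤ RingHom.ker (eval ![(-1:k),0,0]) := by
    rw [J1, Ideal.span_le]
    rintro g hg
    simp only [Set.mem_insert_iff, Set.mem_singleton_iff] at hg
    rcases hg with rfl|rfl|rfl <;>
      simp [RingHom.mem_ker, SetLike.mem_coe]
  exact this hf

lemma ev1_eq {f : S} (h : ∀ α ∈ f.support, α 0 ≤ 1) :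
    eval ![(-1:k),0,0] f = coeff 0 f - coeff (Finsupp.single 0 1) f := by
  classical
  rw [eval_eq]
  set v : Fin 3 → k := ![(-1:k),0,0] with hv
  set t : (Fin 3 →₀ ℕ) → k := fun d => coeff d f * ∏ i ∈ d.support, v i ^ d i with ht
  have hsplit := Finset.sum_filter_add_sum_filter_not f.support (fun d => d 1 = 0 ∧ d 2 = 0) t
  have hzero : ∑ d ∈ f.support.filter (fun d => ¬(d 1 = 0 ∧ d 2 = 0)), t d = 0 := by
    refine Finset.sum_eq_zero fun d hd => ?_
    rw [Finset.mem_filter] at hd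
    have hd2 := hd.2
    push_neg at hd2
    rcases Nat.eq_zero_or_pos (d 1) with h1|h1
    · have h2 := hd2 h1
      have hm : (2 : Fin 3) ∈ d.support := Finsupp.mem_support_iff.mpr h2
      rw [ht]
      dsimp only
      rw [Finset.prod_eq_zero hm (by simp [hv, zero_pow h2]), mul_zero]
    · have hm : (1 : Fin 3) ∈ d.support := Finsupp.mem_support_iff.mpr h1.ne'
      rw [ht]
      dsimp only
      rw [Finset.prod_eq_zero hm (by simp [hv, zero_pow h1.ne']), mul_zero]
  have hsub : f.support.filter (fun d => d 1 = 0 ∧ d 2 = 0)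
      ⊆ ({0, Finsupp.single 0 1} : Finset (Fin 3 →₀ ℕ)) := by
    intro d hd
    rw [Finset.mem_filter] at hd
    have h0 : d 0 ≤ 1 := h d hd.1
    rw [Finset.mem_insert, Finset.mem_singleton]
    rcases Nat.eq_zero_or_pos (d 0) with hz|hp
    · left; ext i; fin_cases i <;> simp [hz, hd.2.1, hd.2.2]
    · right; ext i; fin_cases i <;> simp [Finsupp.single_apply, hd.2.1, hd.2.2] <;> omega
  have hfirst : ∑ d ∈ f.support.filter (fun d => d 1 = 0 ∧ d 2 = 0), t d
      = ∑ d ∈ ({0, Finsupp.single 0 1} : Finset (Fin 3 →₀ ℕ)), t d := by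
    refine Finset.sum_subset hsub ?_
    intro d hd hnd
    have hns : d ∉ f.support := by
      intro hds
      apply hnd
      rw [Finset.mem_filter]
      refine ⟨hds, ?_⟩
      rw [Finset.mem_insert, Finset.mem_singleton] at hd
      rcases hd with rfl|rfl <;> simp [Finsupp.single_apply]
    rw [ht]
    dsimp only
    rw [notMem_support_iff.mp hns, zero_mul]
  have h0ne : (0 : Fin 3 →₀ ℕ) ∉ ({Finsupp.single 0 1} : Finset (Fin 3 →₀ ℕ)) := by
    simp [eq_comm, Finsupp.single_eq_zero]
  have hT : ∑ d ∈ ({0, Finsupp.single 0 1} : Finset (Fin 3 →₀ ℕ)), t d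
      = coeff 0 f - coeff (Finsupp.single 0 1) f := by
    rw [Finset.sum_insert h0ne, Finset.sum_singleton, ht]
    dsimp only
    rw [Finsupp.support_zero, Finset.prod_empty, mul_one,
      Finsupp.support_single_ne_zero _ one_ne_zero, Finset.prod_singleton]
    simp [hv]
    ring
  calc ∑ d ∈ f.support, f.coeff d * ∏ i ∈ d.support, v i ^ d i
      = ∑ d ∈ f.support, t d := rfl
    _ = coeff 0 f - coeff (Finsupp.single 0 1) f := by
        rw [← hsplit, hzero, add_zero, hfirst, hT]


lemma coeff_e0_vanish {f : S} (hf : f ∈ J1 k ⊓ J2 k) (h : ∀ α ∈ f.support, α 0 ≤ 1) :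
    coeff (Finsupp.single 0 1) f = 0 := by
  have h1 := ev1_vanish f hf.1
  have h0 : coeff 0 f = 0 := by
    refine coeff_vanish_J2 (not_le_of_lt_at 0 (by simp))
      (not_le_of_lt_at 1 (by simp [Finsupp.add_apply, Finsupp.single_apply]))
      (not_le_of_lt_at 2 (by simp)) (not_le_of_lt_at 1 (by simp)) f hf.2
  rw [ev1_eq h, h0, zero_sub, neg_eq_zero] at h1
  exact h1

lemma mem_Ig_of_x0free {f : S} (hf : f ∈ J2 k) (h : ∀ α ∈ f.support, α 0 = 0) :
    f ∈ Ig k := by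
  classical
  set φ : S →ₐ[k] S := aeval ![0, X 1, X 2] with hφ
  have hfix : φ f = f := by
    conv_rhs => rw [← support_sum_monomial_coeff f]
    rw [show φ f = φ (∑ α ∈ f.support, monomial α (coeff α f)) by
      rw [support_sum_monomial_coeff f]]
    rw [map_sum]
    refine Finset.sum_congr rfl fun α hα => ?_
    rw [aeval_monomial, monomial_eq, algebraMap_eq]
    congr 1
    refine Finsupp.prod_congr fun i hi => ?_
    have hi0 : i ≠ 0 := by
      intro hi0
      subst hi0
      exact absurd (h α hα) (Finsupp.mem_support_iff.mp hi)
    fin_cases i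
    · exact absurd rfl hi0
    · simp
    · simp
  have hmap : φ f ∈ Ideal.map φ (J2 k) := Ideal.mem_map_of_mem φ hf
  rw [J2, Ideal.map_span] at hmap
  have hle : Ideal.span (φ '' {X 0, X 1 * X 2, X 2 ^ 3 - X 1 ^ 4}) ≤ Ig k := by
    rw [Ideal.span_le]
    rintro y ⟨x, hx, rfl⟩
    simp only [Set.mem_insert_iff, Set.mem_singleton_iff] at hx
    rcases hx with rfl|rfl|rfl
    · simp only [hφ, aeval_X, show (![0, X 1, X 2] : Fin 3 → S) 0 = 0 from rfl]
      exact (Ig k).zero_mem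
    · simp only [hφ, map_mul, aeval_X, show (![0, X 1, X 2] : Fin 3 → S) 1 = X 1 from rfl,
        show (![0, X 1, X 2] : Fin 3 → S) 2 = X 2 from rfl]
      exact mem_Ig_12
    · simp only [hφ, map_sub, map_pow, aeval_X,
        show (![0, X 1, X 2] : Fin 3 → S) 1 = X 1 from rfl,
        show (![0, X 1, X 2] : Fin 3 → S) 2 = X 2 from rfl]
      exact mem_Ig_bin
  rw [← hfix]
  exact hle hmap


lemma leadForm_sq :
    leadForm ![1,0,0] (X 0^2 + X 0 : S) = X 0 ^ 2 := by
  classical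
  have h21 : (Finsupp.single (0:Fin 3) 2) ≠ Finsupp.single (0:Fin 3) 1 := by
    simp [Finsupp.single_eq_single_iff]
  have hs : (X 0^2 + X 0 : S).support
      = {Finsupp.single 0 2, Finsupp.single 0 1} := by
    ext β
    simp only [mem_support_iff, coeff_add, coeff_X_pow, coeff_X', Finset.mem_insert,
      Finset.mem_singleton]
    rcases eq_or_ne (Finsupp.single (0:Fin 3) 2) β with h|h <;>
      rcases eq_or_ne (Finsupp.single (0:Fin 3) 1) β with h'|h' <;>
      simp_all [eq_comm]
  have hsup : ({Finsupp.single 0 2, Finsupp.single 0 1} : Finset (Fin 3 →₀ ℕ)).sup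
      (wDeg ![1,0,0]) = 2 := by
    simp [Finset.sup_insert, Finset.sup_singleton, wdeg_eq]
  rw [leadForm, hs, hsup]
  rw [Finset.filter_insert, Finset.filter_singleton]
  simp only [wdeg_eq, Finsupp.single_eq_same]
  norm_num
  rw [coeff_X_pow, if_pos rfl, X_pow_eq_monomial]

lemma initial_le : initialIdealW ![1,0,0] (J1 k ⊓ J2 k) ≤ Ig k := by
  rw [initialIdealW, Ideal.span_le]
  rintro g ⟨f, hfJ, hf0, rfl⟩
  simp only [SetLike.mem_coe]
  have hle : ∀ α ∈ f.support, α 0 ≤ f.support.sup (wDeg ![1,0,0]) := fun α hα => by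
    have := Finset.le_sup (f := wDeg ![1,0,0]) hα
    rwa [wdeg_eq] at this
  rcases Nat.lt_or_ge (f.support.sup (wDeg ![1,0,0])) 2 with hlt|hge
  · have hcase : f.support.sup (wDeg ![1,0,0]) = 0 ∨ f.support.sup (wDeg ![1,0,0]) = 1 := by
      omega
    rcases hcase with h0|h1
    · have hfree : ∀ α ∈ f.support, α 0 = 0 := fun α hα =>
        Nat.le_zero.mp (le_trans (hle α hα) (le_of_eq h0))
      rw [leadForm_x0free hfree]
      exact mem_Ig_of_x0free hfJ.2 hfree
    · rw [leadForm]
      refine Ideal.sum_mem _ fun α hα => ?_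
      rw [Finset.mem_filter] at hα
      have hα0 : α 0 = 1 := by
        have := hα.2
        rw [wdeg_eq, h1] at this
        exact this
      by_cases h1' : α 1 = 0
      · by_cases h2' : α 2 = 0
        · have hαe : α = Finsupp.single 0 1 := by
            ext i
            fin_cases i <;> simp [Finsupp.single_apply, hα0, h1', h2']
          rw [hαe, coeff_e0_vanish hfJ (fun β hβ => le_trans (hle β hβ) (le_of_eq h1)),
            monomial_zero]
          exact zero_mem _
        · refine monomial_mem_of_le (γ := Finsupp.single 0 1 + Finsupp.single 2 1) ?_ ?_
          · rw [← X_mul_X]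
            exact mem_Ig_02
          · rw [Finsupp.le_def]
            intro i
            fin_cases i <;>
              simp [Finsupp.add_apply, Finsupp.single_apply, hα0] <;> omega
      · refine monomial_mem_of_le (γ := Finsupp.single 0 1 + Finsupp.single 1 1) ?_ ?_
        · rw [← X_mul_X]
          exact mem_Ig_01
        · rw [Finsupp.le_def]
          intro i
          fin_cases i <;>
            simp [Finsupp.add_apply, Finsupp.single_apply, hα0] <;> omega
  · rw [leadForm]
    refine Ideal.sum_mem _ fun α hα => ?_
    rw [Finset.mem_filter] at hα
    have hα0 : 2 ≤ α 0 := by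
      have := hα.2
      rw [wdeg_eq] at this
      omega
    refine monomial_mem_of_le (γ := Finsupp.single 0 2) ?_ ?_
    · rw [← X_pow_eq_monomial]
      exact mem_Ig_sq
    · rw [Finsupp.le_def]
      intro i
      fin_cases i <;> simp [Finsupp.single_apply] <;> omega

lemma le_initial : Ig k ≤ initialIdealW ![1,0,0] (J1 k ⊓ J2 k) := by
  rw [Ig, Ideal.span_le]
  rintro g hg
  simp only [Set.mem_insert_iff, Set.mem_singleton_iff] at hg
  simp only [SetLike.mem_coe, initialIdealW]
  have hsq_ne : (X 0 ^ 2 + X 0 : S) ≠ 0 := by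
    classical
    intro h0
    have h21 : Finsupp.single (0:Fin 3) 1 ≠ Finsupp.single (0:Fin 3) 2 := by
      simp [Finsupp.single_eq_single_iff]
    have h1 : coeff (Finsupp.single 0 2) (X 0 ^ 2 + X 0 : S) = 1 := by
      rw [coeff_add, coeff_X_pow, if_pos rfl, coeff_X', if_neg h21, add_zero]
    rw [h0, coeff_zero] at h1
    exact zero_ne_one h1
  rcases hg with rfl|rfl|rfl|rfl|rfl
  · exact Ideal.subset_span ⟨X 0 ^ 2 + X 0, mem_J_sq, hsq_ne, leadForm_sq.symm⟩
  · exact Ideal.subset_span ⟨X 0 * X 1, mem_J_01, ne_zero_of_supp_singleton (supp_X_mul_X 0 1),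
      (leadForm_of_supp_singleton (supp_X_mul_X 0 1)).symm⟩
  · exact Ideal.subset_span ⟨X 0 * X 2, mem_J_02, ne_zero_of_supp_singleton (supp_X_mul_X 0 2),
      (leadForm_of_supp_singleton (supp_X_mul_X 0 2)).symm⟩
  · exact Ideal.subset_span ⟨X 1 * X 2, mem_J_12, ne_zero_of_supp_singleton (supp_X_mul_X 1 2),
      (leadForm_of_supp_singleton (supp_X_mul_X 1 2)).symm⟩
  · refine Ideal.subset_span ⟨X 2 ^ 3 - X 1 ^ 4, mem_J_bin, bin_ne_zero, ?_⟩
    refine (leadForm_x0free fun α hα => ?_).symm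
    rcases supp_bin α hα with rfl|rfl <;> simp [Finsupp.single_apply]

lemma part1 : initialIdealW ![1,0,0] (J1 k ⊓ J2 k) = Ig k :=
  le_antisymm initial_le le_initial


/-! ### The quotient basis -/

noncomputable def bb (k : Type*) [Field k] : Fin 8 → S :=
  ![1, X 0, X 1, X 2, X 1^2, X 2^2, X 1^3, X 2^3]

lemma quot_span (L : Ideal S)
    (hmul : ∀ (i : Fin 3) (j : Fin 8), ∃ (c : k) (j' : Fin 8), X i * bb k j - c • bb k j' ∈ L) :
    ∀ f : S, Ideal.Quotient.mkₐ k L f ∈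
      Submodule.span k (Set.range fun j => Ideal.Quotient.mkₐ k L (bb k j)) := by
  intro f
  induction f using MvPolynomial.induction_on with
  | C a =>
      have h1 : (C a : S) = a • (1 : S) := by rw [smul_eq_C_mul, mul_one]
      rw [h1, map_smul]
      refine Submodule.smul_mem _ _ (Submodule.subset_span ⟨0, ?_⟩)
      rfl
  | add p q hp hq => rw [map_add]; exact add_mem hp hq
  | mul_X p i hp =>
      have key : ∀ y ∈ Submodule.span k (Set.range fun j => Ideal.Quotient.mkₐ k L (bb k j)),
          Ideal.Quotient.mkₐ k L (X i) * y ∈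
            Submodule.span k (Set.range fun j => Ideal.Quotient.mkₐ k L (bb k j)) := by
        intro y hy
        refine Submodule.span_induction ?_ ?_ ?_ ?_ hy
        · rintro x ⟨j, rfl⟩
          obtain ⟨c, j', hc⟩ := hmul i j
          have he : Ideal.Quotient.mkₐ k L (X i) * Ideal.Quotient.mkₐ k L (bb k j)
              = c • Ideal.Quotient.mkₐ k L (bb k j') := by
            rw [← map_mul, ← map_smul, ← sub_eq_zero, ← map_sub,
              Ideal.Quotient.mkₐ_eq_mk, Ideal.Quotient.eq_zero_iff_mem]
            exact hc
          rw [he]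
          exact Submodule.smul_mem _ _ (Submodule.subset_span ⟨j', rfl⟩)
        · rw [mul_zero]; exact zero_mem _
        · intro x y _ _ hx hy; rw [mul_add]; exact add_mem hx hy
        · intro c x _ hx; rw [mul_smul_comm]; exact Submodule.smul_mem _ _ hx
      have hmm : Ideal.Quotient.mkₐ k L (p * X i)
          = Ideal.Quotient.mkₐ k L (X i) * Ideal.Quotient.mkₐ k L p := by
        rw [← map_mul, mul_comm]
      rw [hmm]
      exact key _ hp

lemma hmul_of (L : Ideal S) (M1 : (X 0 * X 1 : S) ∈ L) (M2 : (X 0 * X 2 : S) ∈ L)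
    (M3 : (X 1 * X 2 : S) ∈ L) (M4 : (X 1 ^ 4 - X 2 ^ 3 : S) ∈ L) (M5 : (X 2 ^ 4 : S) ∈ L)
    (Msq : ∃ (c : k) (j' : Fin 8), X 0 * X 0 - c • bb k j' ∈ L) :
    ∀ (i : Fin 3) (j : Fin 8), ∃ (c : k) (j' : Fin 8), X i * bb k j - c • bb k j' ∈ L := by
  intro i j
  fin_cases i <;> fin_cases j
  · refine ⟨1, 1, ?_⟩
    show X 0 * 1 - (1:k) • (X 0 : S) ∈ L
    rw [one_smul, mul_one, sub_self]
    exact zero_mem _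
  · obtain ⟨c, j', hc⟩ := Msq
    exact ⟨c, j', hc⟩
  · refine ⟨0, 0, ?_⟩
    show X 0 * X 1 - (0:k) • (1 : S) ∈ L
    rw [zero_smul, sub_zero]
    exact M1
  · refine ⟨0, 0, ?_⟩
    show X 0 * X 2 - (0:k) • (1 : S) ∈ L
    rw [zero_smul, sub_zero]
    exact M2
  · refine ⟨0, 0, ?_⟩
    show X 0 * X 1 ^ 2 - (0:k) • (1 : S) ∈ L
    rw [zero_smul, sub_zero, show (X 0 * X 1 ^ 2 : S) = X 1 * (X 0 * X 1) by ring]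
    exact L.mul_mem_left _ M1
  · refine ⟨0, 0, ?_⟩
    show X 0 * X 2 ^ 2 - (0:k) • (1 : S) ∈ L
    rw [zero_smul, sub_zero, show (X 0 * X 2 ^ 2 : S) = X 2 * (X 0 * X 2) by ring]
    exact L.mul_mem_left _ M2
  · refine ⟨0, 0, ?_⟩
    show X 0 * X 1 ^ 3 - (0:k) • (1 : S) ∈ L
    rw [zero_smul, sub_zero, show (X 0 * X 1 ^ 3 : S) = X 1 ^ 2 * (X 0 * X 1) by ring]
    exact L.mul_mem_left _ M1
  · refine ⟨0, 0, ?_⟩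
    show X 0 * X 2 ^ 3 - (0:k) • (1 : S) ∈ L
    rw [zero_smul, sub_zero, show (X 0 * X 2 ^ 3 : S) = X 2 ^ 2 * (X 0 * X 2) by ring]
    exact L.mul_mem_left _ M2
  · refine ⟨1, 2, ?_⟩
    show X 1 * 1 - (1:k) • (X 1 : S) ∈ L
    rw [one_smul, mul_one, sub_self]
    exact zero_mem _
  · refine ⟨0, 0, ?_⟩
    show X 1 * X 0 - (0:k) • (1 : S) ∈ L
    rw [zero_smul, sub_zero, show (X 1 * X 0 : S) = X 0 * X 1 by ring]
    exact M1
  · refine ⟨1, 4, ?_⟩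
    show X 1 * X 1 - (1:k) • (X 1 ^ 2 : S) ∈ L
    rw [one_smul, show (X 1 * X 1 : S) = X 1 ^ 2 by ring, sub_self]
    exact zero_mem _
  · refine ⟨0, 0, ?_⟩
    show X 1 * X 2 - (0:k) • (1 : S) ∈ L
    rw [zero_smul, sub_zero]
    exact M3
  · refine ⟨1, 6, ?_⟩
    show X 1 * X 1 ^ 2 - (1:k) • (X 1 ^ 3 : S) ∈ L
    rw [one_smul, show (X 1 * X 1 ^ 2 : S) = X 1 ^ 3 by ring, sub_self]
    exact zero_mem _
  · refine ⟨0, 0, ?_⟩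
    show X 1 * X 2 ^ 2 - (0:k) • (1 : S) ∈ L
    rw [zero_smul, sub_zero, show (X 1 * X 2 ^ 2 : S) = X 2 * (X 1 * X 2) by ring]
    exact L.mul_mem_left _ M3
  · refine ⟨1, 7, ?_⟩
    show X 1 * X 1 ^ 3 - (1:k) • (X 2 ^ 3 : S) ∈ L
    rw [one_smul, show (X 1 * X 1 ^ 3 : S) = X 1 ^ 4 by ring]
    exact M4
  · refine ⟨0, 0, ?_⟩
    show X 1 * X 2 ^ 3 - (0:k) • (1 : S) ∈ L
    rw [zero_smul, sub_zero, show (X 1 * X 2 ^ 3 : S) = X 2 ^ 2 * (X 1 * X 2) by ring]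
    exact L.mul_mem_left _ M3
  · refine ⟨1, 3, ?_⟩
    show X 2 * 1 - (1:k) • (X 2 : S) ∈ L
    rw [one_smul, mul_one, sub_self]
    exact zero_mem _
  · refine ⟨0, 0, ?_⟩
    show X 2 * X 0 - (0:k) • (1 : S) ∈ L
    rw [zero_smul, sub_zero, show (X 2 * X 0 : S) = X 0 * X 2 by ring]
    exact M2
  · refine ⟨0, 0, ?_⟩
    show X 2 * X 1 - (0:k) • (1 : S) ∈ L
    rw [zero_smul, sub_zero, show (X 2 * X 1 : S) = X 1 * X 2 by ring]
    exact M3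
  · refine ⟨1, 5, ?_⟩
    show X 2 * X 2 - (1:k) • (X 2 ^ 2 : S) ∈ L
    rw [one_smul, show (X 2 * X 2 : S) = X 2 ^ 2 by ring, sub_self]
    exact zero_mem _
  · refine ⟨0, 0, ?_⟩
    show X 2 * X 1 ^ 2 - (0:k) • (1 : S) ∈ L
    rw [zero_smul, sub_zero, show (X 2 * X 1 ^ 2 : S) = X 1 * (X 1 * X 2) by ring]
    exact L.mul_mem_left _ M3
  · refine ⟨1, 7, ?_⟩
    show X 2 * X 2 ^ 2 - (1:k) • (X 2 ^ 3 : S) ∈ L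
    rw [one_smul, show (X 2 * X 2 ^ 2 : S) = X 2 ^ 3 by ring, sub_self]
    exact zero_mem _
  · refine ⟨0, 0, ?_⟩
    show X 2 * X 1 ^ 3 - (0:k) • (1 : S) ∈ L
    rw [zero_smul, sub_zero, show (X 2 * X 1 ^ 3 : S) = X 1 ^ 2 * (X 1 * X 2) by ring]
    exact L.mul_mem_left _ M3
  · refine ⟨0, 0, ?_⟩
    show X 2 * X 2 ^ 3 - (0:k) • (1 : S) ∈ L
    rw [zero_smul, sub_zero, show (X 2 * X 2 ^ 3 : S) = X 2 ^ 4 by ring]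
    exact M5

lemma not_le₃ {γ β : Fin 3 →₀ ℕ} (h : β 0 < γ 0 ∨ β 1 < γ 1 ∨ β 2 < γ 2) : ¬ γ ≤ β := by
  rcases h with h|h|h
  exacts [not_le_of_lt_at 0 h, not_le_of_lt_at 1 h, not_le_of_lt_at 2 h]

lemma zero_eq_single_iff {i : Fin 3} {n : ℕ} :
    (0 : Fin 3 →₀ ℕ) = Finsupp.single i n ↔ n = 0 :=
  eq_comm.trans Finsupp.single_eq_zero

lemma coeff_combo (g : Fin 8 → k) (β : Fin 3 →₀ ℕ) :
    coeff β (∑ j, g j • bb k j)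
      = g 0 * coeff β (1 : S) + g 1 * coeff β (X 0 : S) + g 2 * coeff β (X 1 : S)
        + g 3 * coeff β (X 2 : S) + g 4 * coeff β (X 1 ^ 2 : S) + g 5 * coeff β (X 2 ^ 2 : S)
        + g 6 * coeff β (X 1 ^ 3 : S) + g 7 * coeff β (X 2 ^ 3 : S) := by
  rw [Fin.sum_univ_eight]
  simp only [coeff_add, coeff_smul, smul_eq_mul,
    show bb k 0 = (1 : S) from rfl, show bb k 1 = (X 0 : S) from rfl,
    show bb k 2 = (X 1 : S) from rfl, show bb k 3 = (X 2 : S) from rfl,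
    show bb k 4 = (X 1 ^ 2 : S) from rfl, show bb k 5 = (X 2 ^ 2 : S) from rfl,
    show bb k 6 = (X 1 ^ 3 : S) from rfl, show bb k 7 = (X 2 ^ 3 : S) from rfl]

lemma sum_mem_of_quot_zero {L : Ideal S} {g : Fin 8 → k}
    (hg : ∑ j, g j • Ideal.Quotient.mkₐ k L (bb k j) = 0) :
    (∑ j, g j • bb k j) ∈ L := by
  rw [← Ideal.Quotient.eq_zero_iff_mem, ← Ideal.Quotient.mkₐ_eq_mk k, map_sum]
  simpa using hg

lemma indep_Ig : LinearIndependent k (fun j => Ideal.Quotient.mkₐ k (Ig k) (bb k j)) := by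
  classical
  rw [Fintype.linearIndependent_iff]
  intro g hg
  have hv : (∑ j, g j • bb k j) ∈ Ig k := sum_mem_of_quot_zero hg
  have h0 : g 0 = 0 := by
    have h := coeff_vanish_Ig (β := (0 : Fin 3 →₀ ℕ)) (not_le₃ (by simp [Finsupp.single_apply, Finsupp.add_apply])) (not_le₃ (by simp [Finsupp.single_apply, Finsupp.add_apply])) (not_le₃ (by simp [Finsupp.single_apply, Finsupp.add_apply])) (not_le₃ (by simp [Finsupp.single_apply, Finsupp.add_apply])) (not_le₃ (by simp [Finsupp.single_apply, Finsupp.add_apply])) (not_le₃ (by simp [Finsupp.single_apply, Finsupp.add_apply])) _ hv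
    rw [coeff_combo] at h
    simpa [coeff_one, coeff_X', coeff_X_pow, Finsupp.single_eq_single_iff,
      Finsupp.single_eq_zero, zero_eq_single_iff] using h
  have h1 : g 1 = 0 := by
    have h := coeff_vanish_Ig (β := Finsupp.single 0 1) (not_le₃ (by simp [Finsupp.single_apply, Finsupp.add_apply])) (not_le₃ (by simp [Finsupp.single_apply, Finsupp.add_apply])) (not_le₃ (by simp [Finsupp.single_apply, Finsupp.add_apply])) (not_le₃ (by simp [Finsupp.single_apply, Finsupp.add_apply])) (not_le₃ (by simp [Finsupp.single_apply, Finsupp.add_apply])) (not_le₃ (by simp [Finsupp.single_apply, Finsupp.add_apply])) _ hv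
    rw [coeff_combo] at h
    simpa [coeff_one, coeff_X', coeff_X_pow, Finsupp.single_eq_single_iff,
      Finsupp.single_eq_zero, zero_eq_single_iff] using h
  have h2 : g 2 = 0 := by
    have h := coeff_vanish_Ig (β := Finsupp.single 1 1) (not_le₃ (by simp [Finsupp.single_apply, Finsupp.add_apply])) (not_le₃ (by simp [Finsupp.single_apply, Finsupp.add_apply])) (not_le₃ (by simp [Finsupp.single_apply, Finsupp.add_apply])) (not_le₃ (by simp [Finsupp.single_apply, Finsupp.add_apply])) (not_le₃ (by simp [Finsupp.single_apply, Finsupp.add_apply])) (not_le₃ (by simp [Finsupp.single_apply, Finsupp.add_apply])) _ hv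
    rw [coeff_combo] at h
    simpa [coeff_one, coeff_X', coeff_X_pow, Finsupp.single_eq_single_iff,
      Finsupp.single_eq_zero, zero_eq_single_iff] using h
  have h3 : g 3 = 0 := by
    have h := coeff_vanish_Ig (β := Finsupp.single 2 1) (not_le₃ (by simp [Finsupp.single_apply, Finsupp.add_apply])) (not_le₃ (by simp [Finsupp.single_apply, Finsupp.add_apply])) (not_le₃ (by simp [Finsupp.single_apply, Finsupp.add_apply])) (not_le₃ (by simp [Finsupp.single_apply, Finsupp.add_apply])) (not_le₃ (by simp [Finsupp.single_apply, Finsupp.add_apply])) (not_le₃ (by simp [Finsupp.single_apply, Finsupp.add_apply])) _ hv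
    rw [coeff_combo] at h
    simpa [coeff_one, coeff_X', coeff_X_pow, Finsupp.single_eq_single_iff,
      Finsupp.single_eq_zero, zero_eq_single_iff] using h
  have h4 : g 4 = 0 := by
    have h := coeff_vanish_Ig (β := Finsupp.single 1 2) (not_le₃ (by simp [Finsupp.single_apply, Finsupp.add_apply])) (not_le₃ (by simp [Finsupp.single_apply, Finsupp.add_apply])) (not_le₃ (by simp [Finsupp.single_apply, Finsupp.add_apply])) (not_le₃ (by simp [Finsupp.single_apply, Finsupp.add_apply])) (not_le₃ (by simp [Finsupp.single_apply, Finsupp.add_apply])) (not_le₃ (by simp [Finsupp.single_apply, Finsupp.add_apply])) _ hv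
    rw [coeff_combo] at h
    simpa [coeff_one, coeff_X', coeff_X_pow, Finsupp.single_eq_single_iff,
      Finsupp.single_eq_zero, zero_eq_single_iff] using h
  have h5 : g 5 = 0 := by
    have h := coeff_vanish_Ig (β := Finsupp.single 2 2) (not_le₃ (by simp [Finsupp.single_apply, Finsupp.add_apply])) (not_le₃ (by simp [Finsupp.single_apply, Finsupp.add_apply])) (not_le₃ (by simp [Finsupp.single_apply, Finsupp.add_apply])) (not_le₃ (by simp [Finsupp.single_apply, Finsupp.add_apply])) (not_le₃ (by simp [Finsupp.single_apply, Finsupp.add_apply])) (not_le₃ (by simp [Finsupp.single_apply, Finsupp.add_apply])) _ hv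
    rw [coeff_combo] at h
    simpa [coeff_one, coeff_X', coeff_X_pow, Finsupp.single_eq_single_iff,
      Finsupp.single_eq_zero, zero_eq_single_iff] using h
  have h6 : g 6 = 0 := by
    have h := coeff_vanish_Ig (β := Finsupp.single 1 3) (not_le₃ (by simp [Finsupp.single_apply, Finsupp.add_apply])) (not_le₃ (by simp [Finsupp.single_apply, Finsupp.add_apply])) (not_le₃ (by simp [Finsupp.single_apply, Finsupp.add_apply])) (not_le₃ (by simp [Finsupp.single_apply, Finsupp.add_apply])) (not_le₃ (by simp [Finsupp.single_apply, Finsupp.add_apply])) (not_le₃ (by simp [Finsupp.single_apply, Finsupp.add_apply])) _ hv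
    rw [coeff_combo] at h
    simpa [coeff_one, coeff_X', coeff_X_pow, Finsupp.single_eq_single_iff,
      Finsupp.single_eq_zero, zero_eq_single_iff] using h
  have h7 : g 7 = 0 := by
    have h := coeff_comb_vanish_Ig _ hv
    rw [coeff_combo, coeff_combo] at h
    simpa [coeff_one, coeff_X', coeff_X_pow, Finsupp.single_eq_single_iff,
      Finsupp.single_eq_zero, zero_eq_single_iff] using h
  intro j
  fin_cases j <;> assumption

lemma indep_J : LinearIndependent k
    (fun j => Ideal.Quotient.mkₐ k (J1 k ⊓ J2 k) (bb k j)) := by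
  classical
  rw [Fintype.linearIndependent_iff]
  intro g hg
  have hv : (∑ j, g j • bb k j) ∈ J1 k ⊓ J2 k := sum_mem_of_quot_zero hg
  have h0 : g 0 = 0 := by
    have h := coeff_vanish_J2 (β := (0 : Fin 3 →₀ ℕ)) (not_le₃ (by simp [Finsupp.single_apply, Finsupp.add_apply])) (not_le₃ (by simp [Finsupp.single_apply, Finsupp.add_apply])) (not_le₃ (by simp [Finsupp.single_apply, Finsupp.add_apply])) (not_le₃ (by simp [Finsupp.single_apply, Finsupp.add_apply])) _ hv.2
    rw [coeff_combo] at h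
    simpa [coeff_one, coeff_X', coeff_X_pow, Finsupp.single_eq_single_iff,
      Finsupp.single_eq_zero, zero_eq_single_iff] using h
  have h2 : g 2 = 0 := by
    have h := coeff_vanish_J2 (β := Finsupp.single 1 1) (not_le₃ (by simp [Finsupp.single_apply, Finsupp.add_apply])) (not_le₃ (by simp [Finsupp.single_apply, Finsupp.add_apply])) (not_le₃ (by simp [Finsupp.single_apply, Finsupp.add_apply])) (not_le₃ (by simp [Finsupp.single_apply, Finsupp.add_apply])) _ hv.2
    rw [coeff_combo] at h
    simpa [coeff_one, coeff_X', coeff_X_pow, Finsupp.single_eq_single_iff,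
      Finsupp.single_eq_zero, zero_eq_single_iff] using h
  have h3 : g 3 = 0 := by
    have h := coeff_vanish_J2 (β := Finsupp.single 2 1) (not_le₃ (by simp [Finsupp.single_apply, Finsupp.add_apply])) (not_le₃ (by simp [Finsupp.single_apply, Finsupp.add_apply])) (not_le₃ (by simp [Finsupp.single_apply, Finsupp.add_apply])) (not_le₃ (by simp [Finsupp.single_apply, Finsupp.add_apply])) _ hv.2
    rw [coeff_combo] at h
    simpa [coeff_one, coeff_X', coeff_X_pow, Finsupp.single_eq_single_iff,
      Finsupp.single_eq_zero, zero_eq_single_iff] using h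
  have h4 : g 4 = 0 := by
    have h := coeff_vanish_J2 (β := Finsupp.single 1 2) (not_le₃ (by simp [Finsupp.single_apply, Finsupp.add_apply])) (not_le₃ (by simp [Finsupp.single_apply, Finsupp.add_apply])) (not_le₃ (by simp [Finsupp.single_apply, Finsupp.add_apply])) (not_le₃ (by simp [Finsupp.single_apply, Finsupp.add_apply])) _ hv.2
    rw [coeff_combo] at h
    simpa [coeff_one, coeff_X', coeff_X_pow, Finsupp.single_eq_single_iff,
      Finsupp.single_eq_zero, zero_eq_single_iff] using h
  have h5 : g 5 = 0 := by
    have h := coeff_vanish_J2 (β := Finsupp.single 2 2) (not_le₃ (by simp [Finsupp.single_apply, Finsupp.add_apply])) (not_le₃ (by simp [Finsupp.single_apply, Finsupp.add_apply])) (not_le₃ (by simp [Finsupp.single_apply, Finsupp.add_apply])) (not_le₃ (by simp [Finsupp.single_apply, Finsupp.add_apply])) _ hv.2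
    rw [coeff_combo] at h
    simpa [coeff_one, coeff_X', coeff_X_pow, Finsupp.single_eq_single_iff,
      Finsupp.single_eq_zero, zero_eq_single_iff] using h
  have h6 : g 6 = 0 := by
    have h := coeff_vanish_J2 (β := Finsupp.single 1 3) (not_le₃ (by simp [Finsupp.single_apply, Finsupp.add_apply])) (not_le₃ (by simp [Finsupp.single_apply, Finsupp.add_apply])) (not_le₃ (by simp [Finsupp.single_apply, Finsupp.add_apply])) (not_le₃ (by simp [Finsupp.single_apply, Finsupp.add_apply])) _ hv.2
    rw [coeff_combo] at h
    simpa [coeff_one, coeff_X', coeff_X_pow, Finsupp.single_eq_single_iff,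
      Finsupp.single_eq_zero, zero_eq_single_iff] using h
  have h7 : g 7 = 0 := by
    have h := coeff_comb_vanish_J2 _ hv.2
    rw [coeff_combo, coeff_combo] at h
    simpa [coeff_one, coeff_X', coeff_X_pow, Finsupp.single_eq_single_iff,
      Finsupp.single_eq_zero, zero_eq_single_iff] using h
  have h1 : g 1 = 0 := by
    have hev := ev1_vanish _ hv.1
    have hcalc : eval ![(-1:k),0,0] (∑ j, g j • bb k j) = g 0 - g 1 := by
      rw [Fin.sum_univ_eight]
      simp only [smul_eq_C_mul,
        show bb k 0 = (1 : S) from rfl, show bb k 1 = (X 0 : S) from rfl,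
        show bb k 2 = (X 1 : S) from rfl, show bb k 3 = (X 2 : S) from rfl,
        show bb k 4 = (X 1 ^ 2 : S) from rfl, show bb k 5 = (X 2 ^ 2 : S) from rfl,
        show bb k 6 = (X 1 ^ 3 : S) from rfl, show bb k 7 = (X 2 ^ 3 : S) from rfl,
        map_add, map_mul, map_pow, map_one, eval_C, eval_X,
        show (![(-1:k),0,0]) 0 = -1 from rfl, show (![(-1:k),0,0]) 1 = 0 from rfl,
        show (![(-1:k),0,0]) 2 = 0 from rfl]
      ring
    rw [hcalc, h0] at hev
    rwa [zero_sub, neg_eq_zero] at hev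
  intro j
  fin_cases j <;> assumption


lemma span_top (L : Ideal S)
    (hmul : ∀ (i : Fin 3) (j : Fin 8), ∃ (c : k) (j' : Fin 8), X i * bb k j - c • bb k j' ∈ L) :
    ⊤ ≤ Submodule.span k (Set.range fun j => Ideal.Quotient.mkₐ k L (bb k j)) := by
  rintro z -
  obtain ⟨f, rfl⟩ := Ideal.Quotient.mkₐ_surjective k L z
  exact quot_span L hmul f

lemma finrank_eq_eight (L : Ideal S)
    (hmul : ∀ (i : Fin 3) (j : Fin 8), ∃ (c : k) (j' : Fin 8), X i * bb k j - c • bb k j' ∈ L)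
    (hind : LinearIndependent k fun j => Ideal.Quotient.mkₐ k L (bb k j)) :
    Module.finrank k (S ⧸ L) = 8 := by
  let B : Module.Basis (Fin 8) k (S ⧸ L) := Module.Basis.mk hind (span_top L hmul)
  rw [Module.finrank_eq_card_basis B]
  simp

lemma M4_Ig : (X 1 ^ 4 - X 2 ^ 3 : S) ∈ Ig k := by
  rw [show (X 1 ^ 4 - X 2 ^ 3 : S) = -(X 2 ^ 3 - X 1 ^ 4) by ring]
  exact neg_mem mem_Ig_bin

lemma M5_Ig : (X 2 ^ 4 : S) ∈ Ig k := by
  rw [show (X 2 ^ 4 : S) = X 2 * (X 2 ^ 3 - X 1 ^ 4) + X 1 ^ 3 * (X 1 * X 2) by ring]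
  exact add_mem ((Ig k).mul_mem_left _ mem_Ig_bin) ((Ig k).mul_mem_left _ mem_Ig_12)

lemma M4_J : (X 1 ^ 4 - X 2 ^ 3 : S) ∈ J1 k ⊓ J2 k := by
  rw [show (X 1 ^ 4 - X 2 ^ 3 : S) = -(X 2 ^ 3 - X 1 ^ 4) by ring]
  exact neg_mem mem_J_bin

lemma M5_J : (X 2 ^ 4 : S) ∈ J1 k ⊓ J2 k := by
  rw [show (X 2 ^ 4 : S) = X 2 * (X 2 ^ 3 - X 1 ^ 4) + X 1 ^ 3 * (X 1 * X 2) by ring]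
  exact add_mem (Ideal.mul_mem_left _ _ mem_J_bin) (Ideal.mul_mem_left _ _ mem_J_12)

lemma finrank_Ig : Module.finrank k (S ⧸ Ig k) = 8 := by
  refine finrank_eq_eight _ (hmul_of _ mem_Ig_01 mem_Ig_02 mem_Ig_12 M4_Ig M5_Ig ⟨0, 0, ?_⟩)
    indep_Ig
  show (X 0 * X 0 - (0:k) • (1 : S)) ∈ Ig k
  rw [zero_smul, sub_zero, show (X 0 * X 0 : S) = X 0 ^ 2 by ring]
  exact mem_Ig_sq

lemma finrank_J : Module.finrank k (S ⧸ (J1 k ⊓ J2 k)) = 8 := by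
  refine finrank_eq_eight _ (hmul_of _ mem_J_01 mem_J_02 mem_J_12 M4_J M5_J ⟨-1, 1, ?_⟩)
    indep_J
  show (X 0 * X 0 - (-1:k) • (X 0 : S)) ∈ J1 k ⊓ J2 k
  rw [neg_smul, one_smul, sub_neg_eq_add, show (X 0 * X 0 + X 0 : S) = X 0 ^ 2 + X 0 by ring]
  exact mem_J_sq

end Aux

theorem stmt14 (k : Type*) [Field k] (h2 : (2 : k) ≠ 0) (h3 : (3 : k) ≠ 0)
    (I J : Ideal (MvPolynomial (Fin 3) k))
    (hI : I = Ideal.span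
      {X 0 ^ 2, X 0 * X 1, X 0 * X 2, X 1 * X 2, X 2 ^ 3 - X 1 ^ 4})
    (hJ : J = Ideal.span {X 0 + 1, X 1, X 2} ⊓
              Ideal.span {X 0, X 1 * X 2, X 2 ^ 3 - X 1 ^ 4}) :
    initialIdealW ![1, 0, 0] J = I ∧
    Module.finrank k (MvPolynomial (Fin 3) k ⧸ I) = 8 ∧
    Module.finrank k (MvPolynomial (Fin 3) k ⧸ J) = 8 := by
  subst hI hJ
  exact ⟨Aux.part1, Aux.finrank_Ig, Aux.finrank_J⟩
end
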